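/- arXiv:1703.03167 — 5 statements merged into one kernel-verified Lean document; each statement's English description precedes it below -/
import Mathlib

section
/- Define the bias-corrected cross-validation estimator R̂^{vc-cor}(f̂_m; D_n; (E_j)) = R̂^{vc}(f̂_m; D_n; (E_j)) + R̂_n(f̂_m(D_n)) − (1/V) ∑_{j=1}^V R̂_n(f̂_m(D_n^{E_j})). Assume the splits are independent of D_n and that there exists γ(m) ∈ ℝ such that for all k ≥ 1, E[R_P(f̂_m(D_k)) − R̂_k(f̂_m(D_k))] = γ(m)/k. Then for every n ≥ 1 and every family of splits, E[R̂^{vc-cor}(f̂_m; D_n; (E_j))] = E[R_P(f̂_m(D_n))], i.e., corrected cross-validation is exactly unbiased. -/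
open MeasureTheory ProbabilityTheory Finset

noncomputable section

variable {𝒳 𝒴 : Type*}

/-- The predictor obtained by training the learning rule `fhat` on the subsample of `d`
indexed by `s` (listed in increasing order of indices). -/
def trained (fhat : (k : ℕ) → (Fin k → 𝒳 × 𝒴) → 𝒳 → 𝒴) {n : ℕ}
    (s : Finset (Fin n)) (d : Fin n → 𝒳 × 𝒴) : 𝒳 → 𝒴 :=
  fhat s.card (fun j => d ↑(s.orderIsoOfFin rfl j))

/-- Empirical risk of the predictor `f`, for the cost `c`, on the subsample of `d`
indexed by `A`. -/
def empOn (c : 𝒴 → 𝒴 → ℝ) {n : ℕ} (A : Finset (Fin n)) (f : 𝒳 → 𝒴)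
    (d : Fin n → 𝒳 × 𝒴) : ℝ :=
  (A.card : ℝ)⁻¹ * ∑ i ∈ A, c (f (d i).1) (d i).2

/-- Hold-out (simple validation) estimator: train on the subsample indexed by `s`,
validate on the complementary subsample. -/
def holdout (c : 𝒴 → 𝒴 → ℝ) (fhat : (k : ℕ) → (Fin k → 𝒳 × 𝒴) → 𝒳 → 𝒴) {n : ℕ}
    (s : Finset (Fin n)) (d : Fin n → 𝒳 × 𝒴) : ℝ :=
  empOn c sᶜ (trained fhat s d) d

variable [MeasurableSpace 𝒳] [MeasurableSpace 𝒴]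

/-- Risk of a predictor `f` under the data distribution `P`, for the cost `c`. -/
def risk (P : Measure (𝒳 × 𝒴)) (c : 𝒴 → 𝒴 → ℝ) (f : 𝒳 → 𝒴) : ℝ :=
  ∫ z, c (f z.1) z.2 ∂P

/-- Mean risk of the rule `fhat` trained on an i.i.d. sample of size `k` with law `P`. -/
def meanRisk (P : Measure (𝒳 × 𝒴)) [IsProbabilityMeasure P] (c : 𝒴 → 𝒴 → ℝ)
    (fhat : (k : ℕ) → (Fin k → 𝒳 × 𝒴) → 𝒳 → 𝒴) (k : ℕ) : ℝ :=
  ∫ d : Fin k → 𝒳 × 𝒴, risk P c (fhat k d) ∂(Measure.pi fun _ => P)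

end

instance {α : Type*} : MeasurableSpace (Finset α) := ⊤

section
variable {Z : Type*} [MeasurableSpace Z]

noncomputable def cvSplit {n : ℕ} (s : Finset (Fin n)) :
    (Fin n → Z) ≃ᵐ (Fin s.card → Z) × (Fin sᶜ.card → Z) :=
  (MeasurableEquiv.piEquivPiSubtypeProd (fun _ : Fin n => Z) (· ∈ s)).trans
    ((MeasurableEquiv.piCongrLeft (fun _ => Z)
        ((s.orderIsoOfFin rfl).toEquiv : Fin s.card ≃ {i // i ∈ s})).symm.prodCongr
      (MeasurableEquiv.piCongrLeft (fun _ => Z)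
        (((sᶜ.orderIsoOfFin rfl).toEquiv.trans
          (Equiv.subtypeEquivRight fun i => Finset.mem_compl)) :
            Fin sᶜ.card ≃ {i // ¬ i ∈ s})).symm)

lemma cvSplit_apply {n : ℕ} (s : Finset (Fin n)) (d : Fin n → Z) :
    cvSplit s d = (fun j => d ((s.orderIsoOfFin rfl j) : Fin n),
      fun j => d ((sᶜ.orderIsoOfFin rfl j) : Fin n)) := by
  simp only [cvSplit, MeasurableEquiv.trans, MeasurableEquiv.prodCongr, MeasurableEquiv.symm,
    MeasurableEquiv.piCongrLeft, Equiv.piCongrLeft, MeasurableEquiv.piEquivPiSubtypeProd,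
    Equiv.piEquivPiSubtypeProd, MeasurableEquiv.coe_mk, Equiv.coe_fn_mk, Equiv.coe_trans,
    Function.comp_apply, Equiv.prodCongr_apply, Prod.map, Equiv.coe_fn_symm_mk]
  constructor <;> funext j <;> simp [Equiv.piCongrLeft'_apply]

lemma cvSplit_measurePreserving {n : ℕ} (s : Finset (Fin n)) (P : Measure Z)
    [IsProbabilityMeasure P] :
    MeasurePreserving (cvSplit (Z := Z) s) (Measure.pi fun _ : Fin n => P)
      ((Measure.pi fun _ : Fin s.card => P).prod (Measure.pi fun _ : Fin sᶜ.card => P)) := by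
  have h1 := measurePreserving_piEquivPiSubtypeProd (fun _ : Fin n => P) (· ∈ s)
  have h2 := (measurePreserving_piCongrLeft (fun _ : {i // i ∈ s} => P)
      ((s.orderIsoOfFin rfl).toEquiv : Fin s.card ≃ {i // i ∈ s})).symm _
  have h3 := (measurePreserving_piCongrLeft (fun _ : {i // ¬ i ∈ s} => P)
      (((sᶜ.orderIsoOfFin rfl).toEquiv.trans
          (Equiv.subtypeEquivRight fun i => Finset.mem_compl)) :
            Fin sᶜ.card ≃ {i // ¬ i ∈ s})).symm _
  refine MeasurePreserving.comp
    (f := ⇑(MeasurableEquiv.piEquivPiSubtypeProd (fun _ : Fin n => Z) (· ∈ s))) (h2.prod h3) ?_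
  convert h1 using 2 <;> congr 1 <;> first | rfl | exact Subsingleton.elim _ _

lemma integrable_of_sum_coord (P : Measure Z) [IsProbabilityMeasure P] {m : ℕ}
    {g : Z → ℝ} (hm : 1 ≤ m)
    (hint : Integrable (fun v : Fin m → Z => ∑ i, g (v i)) (Measure.pi fun _ : Fin m => P)) :
    Integrable g P := by
  obtain ⟨m', rfl⟩ : ∃ m', m = m' + 1 := ⟨m - 1, (Nat.succ_pred_eq_of_pos hm).symm⟩
  set e := MeasurableEquiv.piFinSuccAbove (fun _ : Fin (m' + 1) => Z) 0 with he
  have mp := measurePreserving_piFinSuccAbove (fun _ : Fin (m' + 1) => P) 0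
  set H : Z × (Fin m' → Z) → ℝ := fun q => g q.1 + ∑ i, g (q.2 i) with hH
  have hcomp : (fun v : Fin (m' + 1) → Z => ∑ i, g (v i)) = H ∘ e := by
    funext v
    simp only [hH, Function.comp_apply, he, MeasurableEquiv.piFinSuccAbove_apply]
    exact Fin.sum_univ_succAbove (fun i => g (v i)) 0
  have hHint : Integrable H ((P : Measure Z).prod (Measure.pi fun _ : Fin m' => P)) := by
    rw [← mp.integrable_comp_emb e.measurableEmbedding, ← hcomp]
    exact hint
  have hswap : Integrable (H ∘ Prod.swap)
      ((Measure.pi fun _ : Fin m' => P).prod (P : Measure Z)) :=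
    (Measure.measurePreserving_swap.integrable_comp_emb
      MeasurableEquiv.prodComm.measurableEmbedding).mpr hHint
  have : NeZero (Measure.pi fun _ : Fin m' => P) := ⟨IsProbabilityMeasure.ne_zero _⟩
  obtain ⟨w, hw⟩ := hswap.prod_right_ae.exists
  have hw' : Integrable (fun z => g z + ∑ i, g (w i)) P := hw
  exact integrable_add_const_iff.mp hw'

lemma measurePreserving_eval_pi (P : Measure Z) [IsProbabilityMeasure P] {m : ℕ} (i : Fin m) :
    MeasurePreserving (fun v : Fin m → Z => v i) (Measure.pi fun _ : Fin m => P) P := by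
  obtain ⟨m', rfl⟩ : ∃ m', m = m' + 1 := ⟨m - 1, (Nat.succ_pred_eq_of_pos i.pos).symm⟩
  have mp := measurePreserving_piFinSuccAbove (fun _ : Fin (m' + 1) => P) i
  have mpfst : MeasurePreserving (Prod.fst : Z × (Fin m' → Z) → Z)
      ((P : Measure Z).prod (Measure.pi fun _ : Fin m' => P)) P := ⟨measurable_fst, by simp⟩
  exact mpfst.comp mp

lemma MeasureTheory.MeasurePreserving.integral_comp_noemb {α β : Type*} [MeasurableSpace α] [MeasurableSpace β]
    {μ : Measure α} {ν : Measure β} {f : α → β} (hf : MeasurePreserving f μ ν) {g : β → ℝ}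
    (hg : AEStronglyMeasurable g ν) : ∫ x, g (f x) ∂μ = ∫ y, g y ∂ν := by
  rw [← integral_map hf.measurable.aemeasurable (by rwa [hf.map_eq]), hf.map_eq]

lemma integral_sum_coord (P : Measure Z) [IsProbabilityMeasure P] {m : ℕ}
    {g : Z → ℝ} (hg : AEStronglyMeasurable g P) (hgi : Integrable g P) :
    ∫ v : Fin m → Z, (∑ i, g (v i)) ∂(Measure.pi fun _ : Fin m => P) = m * ∫ z, g z ∂P := by
  rw [integral_finset_sum]
  · simp [fun i : Fin m => (measurePreserving_eval_pi P i).integral_comp_noemb hg,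
      Finset.card_univ]
  · intro i _
    exact ((measurePreserving_eval_pi P i).integrable_comp hg).mpr hgi

end

section Key
variable {𝒳 𝒴 : Type*} [MeasurableSpace 𝒳] [MeasurableSpace 𝒴]

lemma sum_compl_enum {n : ℕ} (s : Finset (Fin n)) (φ : Fin n → ℝ) :
    ∑ j : Fin sᶜ.card, φ ((sᶜ.orderIsoOfFin rfl j : {x // x ∈ sᶜ}) : Fin n)
      = ∑ i ∈ sᶜ, φ i := by
  rw [← Finset.sum_coe_sort sᶜ φ]
  exact Equiv.sum_comp (sᶜ.orderIsoOfFin rfl).toEquiv (fun x : {x // x ∈ sᶜ} => φ x)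

lemma sum_self_enum {n : ℕ} (s : Finset (Fin n)) (φ : Fin n → ℝ) :
    ∑ j : Fin s.card, φ ((s.orderIsoOfFin rfl j : {x // x ∈ s}) : Fin n)
      = ∑ i ∈ s, φ i := by
  rw [← Finset.sum_coe_sort s φ]
  exact Equiv.sum_comp (s.orderIsoOfFin rfl).toEquiv (fun x : {x // x ∈ s} => φ x)

lemma holdout_integral (P : Measure (𝒳 × 𝒴)) [IsProbabilityMeasure P] (c : 𝒴 → 𝒴 → ℝ)
    (fhat : (k : ℕ) → (Fin k → 𝒳 × 𝒴) → 𝒳 → 𝒴)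
    (hc : ∀ k, Measurable (fun q : (Fin k → 𝒳 × 𝒴) × (𝒳 × 𝒴) => c (fhat k q.1 q.2.1) q.2.2))
    {n : ℕ} (s : Finset (Fin n)) (hsu : s ≠ Finset.univ)
    (hhold : Integrable (fun d => holdout c fhat s d) (Measure.pi fun _ : Fin n => P)) :
    ∫ d, holdout c fhat s d ∂(Measure.pi fun _ : Fin n => P) = meanRisk P c fhat s.card := by
  classical
  set k := s.card with hk
  set m := sᶜ.card with hmdef
  have hm : 1 ≤ m := by
    rw [hmdef]
    refine Finset.card_pos.mpr ?_
    rw [Finset.nonempty_iff_ne_empty]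
    exact fun h => hsu ((Finset.compl_eq_empty_iff s).mp h)
  have hm0 : (m : ℝ) ≠ 0 := Nat.cast_ne_zero.mpr (by omega)
  set g : (Fin k → 𝒳 × 𝒴) → 𝒳 × 𝒴 → ℝ := fun u z => c (fhat k u z.1) z.2 with hg
  set H : (Fin k → 𝒳 × 𝒴) × (Fin m → 𝒳 × 𝒴) → ℝ :=
    fun q => (m : ℝ)⁻¹ * ∑ j, g q.1 (q.2 j) with hH
  have hW := cvSplit_measurePreserving (Z := 𝒳 × 𝒴) s P
  have hcomp : (fun d => holdout c fhat s d) = H ∘ (cvSplit (Z := 𝒳 × 𝒴) s) := by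
    funext d
    simp only [Function.comp_apply, cvSplit_apply, hH, holdout, empOn, trained, hg]
    rw [sum_compl_enum s (fun i => c (fhat s.card (fun j => d ↑((s.orderIsoOfFin rfl) j))
      (d i).1) (d i).2)]
  have hHmeas : Measurable H := by
    refine measurable_const.mul (Finset.measurable_sum _ fun j _ => ?_)
    exact (hc k).comp (measurable_fst.prodMk ((measurable_pi_apply j).comp measurable_snd))
  have hHint : Integrable H ((Measure.pi fun _ : Fin k => P).prod
      (Measure.pi fun _ : Fin m => P)) := by
    rw [← hW.integrable_comp hHmeas.aestronglyMeasurable, ← hcomp]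
    exact hhold
  rw [hcomp]
  have h1 : ∫ d, (H ∘ (cvSplit (Z := 𝒳 × 𝒴) s)) d ∂(Measure.pi fun _ : Fin n => P)
      = ∫ q, H q ∂((Measure.pi fun _ : Fin k => P).prod (Measure.pi fun _ : Fin m => P)) :=
    hW.integral_comp_noemb hHmeas.aestronglyMeasurable
  rw [h1, integral_prod _ hHint]
  have hae : ∀ᵐ u ∂(Measure.pi fun _ : Fin k => P),
      ∫ v, H (u, v) ∂(Measure.pi fun _ : Fin m => P) = risk P c (fhat k u) := by
    filter_upwards [hHint.prod_right_ae] with u hu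
    have hu2 : Integrable (fun v : Fin m → 𝒳 × 𝒴 => ∑ j, g u (v j))
        (Measure.pi fun _ : Fin m => P) := by
      have heq : (fun v : Fin m → 𝒳 × 𝒴 => ∑ j, g u (v j))
          = fun v => (m : ℝ) * ((m : ℝ)⁻¹ * ∑ j, g u (v j)) := by
        funext v; rw [← mul_assoc, mul_inv_cancel₀ hm0, one_mul]
      rw [heq]
      exact hu.const_mul _
    have hgm : AEStronglyMeasurable (g u) P :=
      ((hc k).comp (measurable_const.prodMk measurable_id)).aestronglyMeasurable
    have hgi : Integrable (g u) P := integrable_of_sum_coord P hm hu2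
    have : ∫ v, H (u, v) ∂(Measure.pi fun _ : Fin m => P)
        = (m : ℝ)⁻¹ * ∫ v, (∑ j, g u (v j)) ∂(Measure.pi fun _ : Fin m => P) := by
      simp only [hH]
      exact integral_const_mul _ _
    rw [this, integral_sum_coord P hgm hgi, ← mul_assoc, inv_mul_cancel₀ hm0, one_mul]
    rfl
  rw [integral_congr_ae hae]
  rfl

end Key

section Key2
variable {𝒳 𝒴 : Type*} [MeasurableSpace 𝒳] [MeasurableSpace 𝒴]

lemma empUT_integral (P : Measure (𝒳 × 𝒴)) [IsProbabilityMeasure P] (c : 𝒴 → 𝒴 → ℝ)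
    (fhat : (k : ℕ) → (Fin k → 𝒳 × 𝒴) → 𝒳 → 𝒴)
    (hc : ∀ k, Measurable (fun q : (Fin k → 𝒳 × 𝒴) × (𝒳 × 𝒴) => c (fhat k q.1 q.2.1) q.2.2))
    {n : ℕ} (s : Finset (Fin n)) (hs : s.Nonempty) (hsu : s ≠ Finset.univ) (γ : ℝ)
    (hint4k : Integrable (fun d : Fin s.card → 𝒳 × 𝒴 => risk P c (fhat s.card d))
      (Measure.pi fun _ : Fin s.card => P))
    (hpenk : (∫ d : Fin s.card → 𝒳 × 𝒴,
        (risk P c (fhat s.card d) - empOn c Finset.univ (fhat s.card d) d)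
        ∂(Measure.pi fun _ : Fin s.card => P)) = γ / s.card)
    (hhold : Integrable (fun d => holdout c fhat s d) (Measure.pi fun _ : Fin n => P))
    (hUT : Integrable (fun d => empOn c Finset.univ (trained fhat s d) d)
      (Measure.pi fun _ : Fin n => P)) :
    ∫ d, empOn c Finset.univ (trained fhat s d) d ∂(Measure.pi fun _ : Fin n => P)
      = meanRisk P c fhat s.card - γ / n := by
  classical
  set k := s.card with hk
  set m := sᶜ.card with hmdef
  have hk1 : 1 ≤ k := Finset.card_pos.mpr hs
  have hm : 1 ≤ m := by
    rw [hmdef]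
    refine Finset.card_pos.mpr ?_
    rw [Finset.nonempty_iff_ne_empty]
    exact fun h => hsu ((Finset.compl_eq_empty_iff s).mp h)
  have hkm : k + m = n := by
    rw [hk, hmdef, Finset.card_add_card_compl, Fintype.card_fin]
  have hk0 : (k : ℝ) ≠ 0 := Nat.cast_ne_zero.mpr (by omega)
  have hm0 : (m : ℝ) ≠ 0 := Nat.cast_ne_zero.mpr (by omega)
  have hn0 : (n : ℝ) ≠ 0 := Nat.cast_ne_zero.mpr (by omega)
  have hW := cvSplit_measurePreserving (Z := 𝒳 × 𝒴) s P
  set Ek : (Fin k → 𝒳 × 𝒴) → ℝ := fun u => empOn c Finset.univ (fhat k u) u with hEk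
  have decomp : ∀ d : Fin n → 𝒳 × 𝒴, empOn c Finset.univ (trained fhat s d) d
      = ((k : ℝ)/n) * Ek ((cvSplit (Z := 𝒳 × 𝒴) s d).1)
        + ((m : ℝ)/n) * holdout c fhat s d := by
    intro d
    have hu : (cvSplit (Z := 𝒳 × 𝒴) s d).1 = fun j => d ((s.orderIsoOfFin rfl j) : Fin n) := by
      rw [cvSplit_apply]
    have htr : fhat k ((cvSplit (Z := 𝒳 × 𝒴) s d).1) = trained fhat s d := by
      rw [hu]; rfl
    set φ : Fin n → ℝ := fun i => c (trained fhat s d (d i).1) (d i).2 with hφ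
    have h1 : empOn c Finset.univ (trained fhat s d) d
        = (n : ℝ)⁻¹ * ((∑ i ∈ s, φ i) + ∑ i ∈ sᶜ, φ i) := by
      rw [empOn, Finset.sum_add_sum_compl, Finset.card_univ, Fintype.card_fin]
    have h2 : holdout c fhat s d = (m : ℝ)⁻¹ * ∑ i ∈ sᶜ, φ i := by
      rw [holdout, empOn, hmdef]
    have h3 : Ek ((cvSplit (Z := 𝒳 × 𝒴) s d).1) = (k : ℝ)⁻¹ * ∑ i ∈ s, φ i := by
      rw [hEk]
      show empOn c Finset.univ (fhat k ((cvSplit (Z := 𝒳 × 𝒴) s d).1))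
        ((cvSplit (Z := 𝒳 × 𝒴) s d).1) = _
      rw [empOn, Finset.card_univ, Fintype.card_fin]
      congr 1
      rw [← sum_self_enum s φ]
      refine Finset.sum_congr rfl fun j _ => ?_
      rw [htr, hu]
    rw [h1, h2, h3]
    field_simp
  have hEkWint : Integrable (fun d => Ek ((cvSplit (Z := 𝒳 × 𝒴) s d).1))
      (Measure.pi fun _ : Fin n => P) := by
    have e1 : (fun d => ((k : ℝ)/n) * Ek ((cvSplit (Z := 𝒳 × 𝒴) s d).1))
        = fun d => empOn c Finset.univ (trained fhat s d) d
          - ((m : ℝ)/n) * holdout c fhat s d := by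
      funext d; rw [decomp d]; ring
    have e2 : Integrable (fun d => ((k : ℝ)/n) * Ek ((cvSplit (Z := 𝒳 × 𝒴) s d).1))
        (Measure.pi fun _ : Fin n => P) := by
      rw [e1]; exact hUT.sub (hhold.const_mul _)
    have e3 := e2.const_mul ((n : ℝ)/k)
    have e4 : (fun d => ((n : ℝ)/k) * (((k : ℝ)/n) * Ek ((cvSplit (Z := 𝒳 × 𝒴) s d).1)))
        = fun d => Ek ((cvSplit (Z := 𝒳 × 𝒴) s d).1) := by
      funext d; field_simp
    rwa [e4] at e3
  have hfst : MeasurePreserving (fun d : Fin n → 𝒳 × 𝒴 => (cvSplit (Z := 𝒳 × 𝒴) s d).1)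
      (Measure.pi fun _ : Fin n => P) (Measure.pi fun _ : Fin k => P) := by
    have mpfst : MeasurePreserving (Prod.fst :
        (Fin k → 𝒳 × 𝒴) × (Fin m → 𝒳 × 𝒴) → (Fin k → 𝒳 × 𝒴))
        ((Measure.pi fun _ : Fin k => P).prod (Measure.pi fun _ : Fin m => P))
        (Measure.pi fun _ : Fin k => P) := ⟨measurable_fst, by simp⟩
    exact mpfst.comp hW
  have hEkmeas : Measurable Ek := by
    refine measurable_const.mul (Finset.measurable_sum _ fun i _ => ?_)
    exact (hc k).comp (measurable_id.prodMk (measurable_pi_apply i))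
  have hEkint : Integrable Ek (Measure.pi fun _ : Fin k => P) :=
    (hfst.integrable_comp hEkmeas.aestronglyMeasurable).mp hEkWint
  have hEkval : ∫ u, Ek u ∂(Measure.pi fun _ : Fin k => P) = meanRisk P c fhat k - γ / k := by
    rw [integral_sub (hint4k) hEkint] at hpenk
    have : ∫ u, Ek u ∂(Measure.pi fun _ : Fin k => P)
        = ∫ d : Fin k → 𝒳 × 𝒴, empOn c Finset.univ (fhat k d) d
          ∂(Measure.pi fun _ : Fin k => P) := rfl
    rw [this]
    have hmr : meanRisk P c fhat k = ∫ d : Fin k → 𝒳 × 𝒴, risk P c (fhat k d)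
        ∂(Measure.pi fun _ : Fin k => P) := rfl
    rw [hmr]
    linarith
  have hsplit : (fun d => empOn c Finset.univ (trained fhat s d) d)
      = fun d => ((k : ℝ)/n) * Ek ((cvSplit (Z := 𝒳 × 𝒴) s d).1)
        + ((m : ℝ)/n) * holdout c fhat s d := funext decomp
  rw [hsplit, integral_add ((hEkWint.const_mul _)) (hhold.const_mul _),
    integral_const_mul, integral_const_mul,
    hfst.integral_comp_noemb hEkmeas.aestronglyMeasurable, hEkval,
    holdout_integral P c fhat hc s hsu hhold]
  have hkmr : ((k : ℝ) + m) = n := by exact_mod_cast congrArg (Nat.cast : ℕ → ℝ) hkm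
  set A := meanRisk P c fhat k with hA
  have harith : ((k : ℝ)/n) * (A - γ/k) + ((m : ℝ)/n) * A = (((k : ℝ) + m)/n) * A - γ/n := by
    field_simp
    ring
  rw [harith, hkmr, div_self hn0, one_mul]

end Key2


section Indep
open MeasureTheory ProbabilityTheory
variable {Ω ZN : Type*} [MeasureSpace Ω] [IsProbabilityMeasure (ℙ : Measure Ω)]
  [MeasurableSpace ZN]

lemma weights_sum_one {n : ℕ} {E : Ω → Finset (Fin n)} (hE : Measurable E) :
    ∑ s : Finset (Fin n), (ℙ (E ⁻¹' {s})).toReal = 1 := by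
  classical
  have h1 : ∑ s : Finset (Fin n), ℙ (E ⁻¹' {s}) = ℙ (E ⁻¹' ↑(Finset.univ : Finset (Finset (Fin n)))) :=
    sum_measure_preimage_singleton _ fun y _ => hE (MeasurableSpace.measurableSet_top)
  have h2 : (∑ s : Finset (Fin n), ℙ (E ⁻¹' {s})).toReal = 1 := by
    rw [h1]
    simp
  rw [← h2, ENNReal.toReal_sum]
  intro a _
  exact measure_ne_top _ _

lemma indep_decomp {n : ℕ} {ν : Measure ZN} [IsProbabilityMeasure ν]
    {D : Ω → ZN} (hD : Measurable D) (hlaw : Measure.map D ℙ = ν)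
    {E : Ω → Finset (Fin n)} (hE : Measurable E)
    (hindep : IndepFun E D ℙ)
    (G : Finset (Fin n) → ZN → ℝ) (hG : ∀ s, Measurable (G s))
    (hGint : Integrable (fun ω => G (E ω) (D ω)) ℙ)
    (G' : Finset (Fin n) → ZN → ℝ) (hG' : ∀ s, Measurable (G' s))
    (hG'int : Integrable (fun ω => G' (E ω) (D ω)) ℙ)
    (r : Finset (Fin n) → ℝ)
    (hval : ∀ s : Finset (Fin n), (∃ ω, E ω = s) → Integrable (G s) ν →
      Integrable (G' s) ν → ∫ x, G s x ∂ν = r s) :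
    ∫ ω, G (E ω) (D ω) ∂ℙ = ∑ s : Finset (Fin n), (ℙ (E ⁻¹' {s})).toReal * r s := by
  classical
  set X : Finset (Fin n) → Ω → ℝ :=
    fun s => Set.indicator (E ⁻¹' {s}) (fun _ => (1 : ℝ)) with hX
  set Y : Finset (Fin n) → Ω → ℝ := fun s ω => G s (D ω) with hY
  have hpre : ∀ s : Finset (Fin n), MeasurableSet (E ⁻¹' {s}) :=
    fun s => hE (MeasurableSpace.measurableSet_top)
  have hXmeas : ∀ s, Measurable (X s) := fun s => measurable_const.indicator (hpre s)
  have hYmeas : ∀ s, Measurable (Y s) := fun s => (hG s).comp hD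
  have hpoint : (fun ω => G (E ω) (D ω)) = fun ω => ∑ s : Finset (Fin n), X s ω * Y s ω := by
    funext ω
    rw [Finset.sum_eq_single (E ω)]
    · rw [hX]
      simp only [Set.indicator_of_mem (show ω ∈ E ⁻¹' {E ω} from rfl), one_mul]
      rfl
    · intro s _ hne
      have : ω ∉ E ⁻¹' {s} := by
        simp only [Set.mem_preimage, Set.mem_singleton_iff]
        exact fun h => hne h.symm
      rw [hX]
      simp only [Set.indicator_of_notMem this, zero_mul]
    · exact fun h => absurd (Finset.mem_univ _) h
  have hXYint : ∀ s : Finset (Fin n), Integrable (fun ω => X s ω * Y s ω) ℙ := by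
    intro s
    refine Integrable.mono hGint ((hXmeas s).mul (hYmeas s)).aestronglyMeasurable
      (Filter.Eventually.of_forall fun ω => ?_)
    by_cases h : ω ∈ E ⁻¹' {s}
    · have hs : E ω = s := h
      rw [hX]
      simp only [Set.indicator_of_mem h, one_mul]
      rw [hY, ← hs]
    · rw [hX]
      simp only [Set.indicator_of_notMem h, zero_mul, norm_zero, norm_nonneg]
  rw [hpoint, integral_finset_sum _ fun s _ => hXYint s]
  refine Finset.sum_congr rfl fun s _ => ?_
  have hindepXY : IndepFun (X s) (Y s) ℙ := by
    have hXeq : X s = (fun t : Finset (Fin n) => if t = s then (1 : ℝ) else 0) ∘ E := by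
      funext ω
      rw [hX]
      by_cases h : E ω = s
      · simp [Set.indicator_apply, Set.mem_preimage, h]
      · simp [Set.indicator_apply, Set.mem_preimage, h]
    rw [hXeq]
    exact IndepFun.comp hindep measurable_from_top (hG s)
  have hmul := hindepXY.integral_fun_mul_eq_mul_integral (hXmeas s).aestronglyMeasurable
    (hYmeas s).aestronglyMeasurable
  rw [hmul]
  have hXval : ∫ ω, X s ω ∂ℙ = (ℙ (E ⁻¹' {s})).toReal := by
    rw [hX]
    rw [integral_indicator_const (1 : ℝ) (hpre s)]
    simp [Measure.real]
  have hYval : ∫ ω, Y s ω ∂ℙ = ∫ x, G s x ∂ν := by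
    rw [← hlaw, integral_map hD.aemeasurable (hG s).aestronglyMeasurable]
  rw [hXval, hYval]
  rcases eq_or_ne (ℙ (E ⁻¹' {s})) 0 with h0 | h0
  · rw [h0]
    simp
  · have hex : ∃ ω, E ω = s := by
      by_contra hno
      push_neg at hno
      apply h0
      have : E ⁻¹' {s} = ∅ := by
        ext ω
        simp only [Set.mem_preimage, Set.mem_singleton_iff, Set.mem_empty_iff_false, iff_false]
        exact hno ω
      rw [this, measure_empty]
    have hXne : ¬ X s =ᵐ[ℙ] 0 := by
      intro habs
      rw [Filter.EventuallyEq, ae_iff] at habs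
      apply h0
      refine measure_mono_null ?_ habs
      intro ω hω
      have : X s ω = 1 := by rw [hX]; exact Set.indicator_of_mem hω _
      simp only [Set.mem_setOf_eq, this, Pi.zero_apply]
      norm_num
    have hYint : Integrable (Y s) ℙ := by
      refine IndepFun.integrable_right_of_integrable_op hindepXY (· * ·) 1 one_ne_zero (fun x y => by simp [enorm_mul]) ?_
        (hXmeas s).aestronglyMeasurable (hYmeas s).aestronglyMeasurable hXne
      exact hXYint s
    have hGsint : Integrable (G s) ν := by
      rw [← hlaw]
      exact (integrable_map_measure (hG s).aestronglyMeasurable hD.aemeasurable).mpr hYint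
    -- same derivation for the auxiliary family G'
    set Y' : Ω → ℝ := fun ω => G' s (D ω) with hY'
    have hY'meas : Measurable Y' := (hG' s).comp hD
    have hindepXY' : IndepFun (X s) Y' ℙ := by
      have hXeq : X s = (fun t : Finset (Fin n) => if t = s then (1 : ℝ) else 0) ∘ E := by
        funext ω
        rw [hX]
        by_cases h : E ω = s
        · simp [Set.indicator_apply, Set.mem_preimage, h]
        · simp [Set.indicator_apply, Set.mem_preimage, h]
      rw [hXeq]
      exact IndepFun.comp hindep measurable_from_top (hG' s)
    have hXY'int : Integrable (fun ω => X s ω * Y' ω) ℙ := by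
      refine Integrable.mono hG'int ((hXmeas s).mul hY'meas).aestronglyMeasurable
        (Filter.Eventually.of_forall fun ω => ?_)
      by_cases h : ω ∈ E ⁻¹' {s}
      · have hs : E ω = s := h
        rw [hX]
        simp only [Set.indicator_of_mem h, one_mul]
        rw [hY', ← hs]
      · rw [hX]
        simp only [Set.indicator_of_notMem h, zero_mul, norm_zero, norm_nonneg]
    have hY'int : Integrable Y' ℙ := by
      refine IndepFun.integrable_right_of_integrable_op hindepXY' (· * ·) 1 one_ne_zero (fun x y => by simp [enorm_mul]) ?_
        (hXmeas s).aestronglyMeasurable hY'meas.aestronglyMeasurable hXne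
      exact hXY'int
    have hG'sint : Integrable (G' s) ν := by
      rw [← hlaw]
      exact (integrable_map_measure (hG' s).aestronglyMeasurable hD.aemeasurable).mpr hY'int
    rw [hval s hex hGsint hG'sint]

end Indep


set_option maxHeartbeats 1000000 in
open MeasureTheory ProbabilityTheory Finset in
/-- Bias-corrected cross-validation is exactly unbiased: assume the splits `Eset j`
(nonempty proper subsets of `{1,…,n}`, independent of the i.i.d. sample `D`) and that
for some `γ`, for every `k ≥ 1`, the expected ideal penalty is
`E[R_P(f̂(D_k)) − R̂_k(f̂(D_k))] = γ/k`. Then the expectation of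
`R̂^vc + R̂_n(f̂(D_n)) − (1/V) ∑_j R̂_n(f̂(D_n^{E_j}))` equals `E[R_P(f̂(D_n))]`. -/
theorem stmt6 {𝒳 𝒴 Ω : Type*} [MeasurableSpace 𝒳] [MeasurableSpace 𝒴]
    [MeasureSpace Ω] [IsProbabilityMeasure (ℙ : Measure Ω)]
    (P : Measure (𝒳 × 𝒴)) [IsProbabilityMeasure P]
    (c : 𝒴 → 𝒴 → ℝ)
    (fhat : (k : ℕ) → (Fin k → 𝒳 × 𝒴) → 𝒳 → 𝒴)
    (hc : ∀ k, Measurable (fun q : (Fin k → 𝒳 × 𝒴) × (𝒳 × 𝒴) => c (fhat k q.1 q.2.1) q.2.2))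
    {n V : ℕ} (hV : 1 ≤ V) (hn : 1 ≤ n)
    (D : Ω → Fin n → 𝒳 × 𝒴) (hD : Measurable D)
    (hlaw : Measure.map D ℙ = Measure.pi fun _ => P)
    (Eset : Fin V → Ω → Finset (Fin n)) (hEmeas : ∀ j, Measurable (Eset j))
    (hEproper : ∀ j ω, (Eset j ω).Nonempty ∧ Eset j ω ≠ Finset.univ)
    (hindep : IndepFun (fun ω j => Eset j ω) D ℙ)
    (hint : ∀ j, Integrable (fun ω => holdout c fhat (Eset j ω) (D ω)) ℙ)
    (hint2 : ∀ j, Integrable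
      (fun ω => empOn c Finset.univ (trained fhat (Eset j ω) (D ω)) (D ω)) ℙ)
    (hint3 : Integrable (fun ω => empOn c Finset.univ (fhat n (D ω)) (D ω)) ℙ)
    (hint4 : ∀ k, Integrable (fun d : Fin k → 𝒳 × 𝒴 => risk P c (fhat k d))
      (Measure.pi fun _ => P))
    (γ : ℝ)
    (hpen : ∀ k : ℕ, 1 ≤ k →
      (∫ d : Fin k → 𝒳 × 𝒴, (risk P c (fhat k d) - empOn c Finset.univ (fhat k d) d)
        ∂(Measure.pi fun _ => P)) = γ / k) :
    (∫ ω,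
      ((V : ℝ)⁻¹ * ∑ j, holdout c fhat (Eset j ω) (D ω)
        + empOn c Finset.univ (fhat n (D ω)) (D ω)
        - (V : ℝ)⁻¹ * ∑ j, empOn c Finset.univ (trained fhat (Eset j ω) (D ω)) (D ω)) ∂ℙ)
      = meanRisk P c fhat n := by
  classical
  -- measurability of the per-split statistics
  have hG1m : ∀ s : Finset (Fin n), Measurable (fun d => holdout c fhat s d) := by
    intro s
    unfold holdout empOn trained
    refine measurable_const.mul (Finset.measurable_sum _ fun i _ => ?_)
    have hg : Measurable (fun d : Fin n → 𝒳 × 𝒴 =>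
        ((fun j => d ↑(s.orderIsoOfFin rfl j), d i) : (Fin s.card → 𝒳 × 𝒴) × (𝒳 × 𝒴))) :=
      Measurable.prodMk (measurable_pi_lambda _ fun j => measurable_pi_apply _)
        (measurable_pi_apply i)
    exact (hc s.card).comp hg
  have hG2m : ∀ s : Finset (Fin n),
      Measurable (fun d => empOn c Finset.univ (trained fhat s d) d) := by
    intro s
    unfold empOn trained
    refine measurable_const.mul (Finset.measurable_sum _ fun i _ => ?_)
    have hg : Measurable (fun d : Fin n → 𝒳 × 𝒴 =>
        ((fun j => d ↑(s.orderIsoOfFin rfl j), d i) : (Fin s.card → 𝒳 × 𝒴) × (𝒳 × 𝒴))) :=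
      Measurable.prodMk (measurable_pi_lambda _ fun j => measurable_pi_apply _)
        (measurable_pi_apply i)
    exact (hc s.card).comp hg
  have hEnm : Measurable (fun d : Fin n → 𝒳 × 𝒴 => empOn c Finset.univ (fhat n d) d) := by
    unfold empOn
    refine measurable_const.mul (Finset.measurable_sum _ fun i _ => ?_)
    have hg : Measurable (fun d : Fin n → 𝒳 × 𝒴 =>
        ((d, d i) : (Fin n → 𝒳 × 𝒴) × (𝒳 × 𝒴))) :=
      Measurable.prodMk measurable_id (measurable_pi_apply i)
    exact (hc n).comp hg
  -- independence of each split from the data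
  have hindepj : ∀ j, IndepFun (Eset j) D ℙ := by
    intro j
    exact hindep.comp (measurable_pi_apply j) measurable_id
  -- the two families of per-split values
  set r1 : Finset (Fin n) → ℝ := fun s => meanRisk P c fhat s.card with hr1
  set r2 : Finset (Fin n) → ℝ := fun s => meanRisk P c fhat s.card - γ / n with hr2
  have h1 : ∀ j, ∫ ω, holdout c fhat (Eset j ω) (D ω) ∂ℙ
      = ∑ s : Finset (Fin n), (ℙ (Eset j ⁻¹' {s})).toReal * r1 s := by
    intro j
    refine indep_decomp hD hlaw (hEmeas j) (hindepj j) _ hG1m (hint j) _ hG1m (hint j) r1 ?_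
    intro s hex hintg _
    obtain ⟨ω, hω⟩ := hex
    have hprop := hEproper j ω
    rw [hω] at hprop
    exact holdout_integral P c fhat hc s hprop.2 hintg
  have h2 : ∀ j, ∫ ω, empOn c Finset.univ (trained fhat (Eset j ω) (D ω)) (D ω) ∂ℙ
      = ∑ s : Finset (Fin n), (ℙ (Eset j ⁻¹' {s})).toReal * r2 s := by
    intro j
    refine indep_decomp hD hlaw (hEmeas j) (hindepj j) _ hG2m (hint2 j) _ hG1m (hint j) r2 ?_
    intro s hex hintg hintg'
    obtain ⟨ω, hω⟩ := hex
    have hprop := hEproper j ω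
    rw [hω] at hprop
    exact empUT_integral P c fhat hc s hprop.1 hprop.2 γ (hint4 s.card)
      (hpen s.card (Finset.card_pos.mpr hprop.1)) hintg' hintg
  -- the resubstitution term
  have hEnint : Integrable (fun d : Fin n → 𝒳 × 𝒴 => empOn c Finset.univ (fhat n d) d)
      (Measure.pi fun _ => P) := by
    rw [← hlaw]
    exact (integrable_map_measure hEnm.aestronglyMeasurable hD.aemeasurable).mpr hint3
  have hmid : ∫ ω, empOn c Finset.univ (fhat n (D ω)) (D ω) ∂ℙ
      = meanRisk P c fhat n - γ / n := by
    have e1 : ∫ ω, empOn c Finset.univ (fhat n (D ω)) (D ω) ∂ℙ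
        = ∫ d, empOn c Finset.univ (fhat n d) d ∂(Measure.pi fun _ => P) := by
      rw [← hlaw, integral_map hD.aemeasurable hEnm.aestronglyMeasurable]
    have hp := hpen n hn
    rw [integral_sub (hint4 n) hEnint] at hp
    have e2 : meanRisk P c fhat n = ∫ d : Fin n → 𝒳 × 𝒴, risk P c (fhat n d)
        ∂(Measure.pi fun _ => P) := rfl
    rw [e1, e2]
    linarith [hp]
  -- assembling
  have intA : Integrable (fun ω => (V : ℝ)⁻¹ * ∑ j, holdout c fhat (Eset j ω) (D ω)) ℙ :=
    (integrable_finset_sum _ fun j _ => hint j).const_mul _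
  have intC : Integrable (fun ω => (V : ℝ)⁻¹ *
      ∑ j, empOn c Finset.univ (trained fhat (Eset j ω) (D ω)) (D ω)) ℙ :=
    (integrable_finset_sum _ fun j _ => hint2 j).const_mul _
  have intAB : Integrable (fun ω => (V : ℝ)⁻¹ * ∑ j, holdout c fhat (Eset j ω) (D ω)
      + empOn c Finset.univ (fhat n (D ω)) (D ω)) ℙ := intA.add hint3
  rw [integral_sub intAB intC, integral_add intA hint3, hmid,
    integral_const_mul, integral_const_mul,
    integral_finset_sum _ fun j _ => hint j,
    integral_finset_sum _ fun j _ => hint2 j]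
  have hVne : (V : ℝ) ≠ 0 := Nat.cast_ne_zero.mpr (by omega)
  set a : ℝ := ∑ j, ∫ ω, holdout c fhat (Eset j ω) (D ω) ∂ℙ with ha
  set b : ℝ := ∑ j, ∫ ω, empOn c Finset.univ (trained fhat (Eset j ω) (D ω)) (D ω) ∂ℙ with hb
  have hab : a - b = (V : ℝ) * (γ / n) := by
    rw [ha, hb, ← Finset.sum_sub_distrib]
    have hterm : ∀ j : Fin V, (∫ ω, holdout c fhat (Eset j ω) (D ω) ∂ℙ)
        - ∫ ω, empOn c Finset.univ (trained fhat (Eset j ω) (D ω)) (D ω) ∂ℙ = γ / n := by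
      intro j
      rw [h1 j, h2 j, ← Finset.sum_sub_distrib]
      have : ∀ s : Finset (Fin n), (ℙ (Eset j ⁻¹' {s})).toReal * r1 s
          - (ℙ (Eset j ⁻¹' {s})).toReal * r2 s
          = (ℙ (Eset j ⁻¹' {s})).toReal * (γ / n) := by
        intro s
        rw [hr1, hr2, ← mul_sub]
        ring_nf
      rw [Finset.sum_congr rfl fun s _ => this s, ← Finset.sum_mul,
        weights_sum_one (hEmeas j), one_mul]
    rw [Finset.sum_congr rfl fun j _ => hterm j, Finset.sum_const, Finset.card_univ,
      Fintype.card_fin, nsmul_eq_mul]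
  have hfin : (V : ℝ)⁻¹ * a - (V : ℝ)⁻¹ * b = γ / n := by
    rw [← mul_sub, hab, ← mul_assoc, inv_mul_cancel₀ hVne, one_mul]
  linarith [hfin]
end

section
/- Under the Monte-Carlo cross-validation setup, Var(R̂^{vc}(f̂_m; D_n; (E_j)_{1≤j≤V})) = Var(R̂^{lpo}(f̂_m; D_n; n−n_e)) + (1/V)[Var(R̂^{val}(f̂_m; D_n; E_1)) − Var(R̂^{lpo}(f̂_m; D_n; n−n_e))]. In particular, the variance of Monte-Carlo cross-validation is a nonincreasing affine function of 1/V, interpolating between the hold-out variance (V = 1) and the leave-(n−n_e)-out variance (V → ∞). -/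
open MeasureTheory ProbabilityTheory Finset

noncomputable section

open Finset in
/-- Leave-`p`-out estimator with training size `n_e` (i.e. `p = n − n_e`): the average of
the hold-out estimators over all subsets of `{1,…,n}` of cardinality `n_e`. -/
def lpo {𝒳 𝒴 : Type*} (c : 𝒴 → 𝒴 → ℝ) (fhat : (k : ℕ) → (Fin k → 𝒳 × 𝒴) → 𝒳 → 𝒴)
    {n : ℕ} (n_e : ℕ) (d : Fin n → 𝒳 × 𝒴) : ℝ :=
  ((Finset.powersetCard n_e (Finset.univ : Finset (Fin n))).card : ℝ)⁻¹ *
    ∑ s ∈ Finset.powersetCard n_e (Finset.univ : Finset (Fin n)), holdout c fhat s d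

end

section Helpers

open MeasureTheory ProbabilityTheory Finset

lemma integrable_mul_of_memL2 {Ω : Type*} [MeasureSpace Ω]
    {f g : Ω → ℝ} (hf : MemLp f 2 ℙ) (hg : MemLp g 2 ℙ) :
    Integrable (fun ω => f ω * g ω) ℙ := by
  have h1 : Integrable (fun ω => (f ω + g ω) ^ 2) ℙ := (hf.add hg).integrable_sq
  have h2 := hf.integrable_sq
  have h3 := hg.integrable_sq
  have heq : (fun ω => f ω * g ω)
      = fun ω => (((f ω + g ω) ^ 2 - f ω ^ 2) - g ω ^ 2) / 2 := by
    funext ω; ring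
  rw [heq]
  exact ((h1.sub h2).sub h3).div_const 2

lemma measurable_holdout' {𝒳 𝒴 : Type*} [MeasurableSpace 𝒳] [MeasurableSpace 𝒴]
    (c : 𝒴 → 𝒴 → ℝ) (fhat : (k : ℕ) → (Fin k → 𝒳 × 𝒴) → 𝒳 → 𝒴)
    (hc : ∀ k, Measurable (fun q : (Fin k → 𝒳 × 𝒴) × (𝒳 × 𝒴) => c (fhat k q.1 q.2.1) q.2.2))
    {n : ℕ} (s : Finset (Fin n)) :
    Measurable fun d : Fin n → 𝒳 × 𝒴 => holdout c fhat s d := by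
  unfold holdout empOn trained
  apply Measurable.const_mul
  apply Finset.measurable_sum
  intro i _
  have heq : (fun d : Fin n → 𝒳 × 𝒴 =>
        c (fhat s.card (fun j => d ↑(s.orderIsoOfFin rfl j)) (d i).1) (d i).2)
      = (fun q : (Fin s.card → 𝒳 × 𝒴) × (𝒳 × 𝒴) => c (fhat s.card q.1 q.2.1) q.2.2) ∘
        (fun d => ((fun j => d ↑(s.orderIsoOfFin rfl j)), d i)) := rfl
  rw [heq]
  exact (hc s.card).comp
    ((measurable_pi_lambda _ fun j => measurable_pi_apply _).prodMk (measurable_pi_apply i))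

/-- Splitting an expectation over the (finitely many) values of a discrete random
variable independent of `Z`. -/
lemma integral_comp_finite {Ω T β : Type*} [MeasureSpace Ω] [IsProbabilityMeasure (ℙ : Measure Ω)]
    [Fintype T] [MeasurableSpace T] [MeasurableSingletonClass T] [MeasurableSpace β]
    (W : Ω → T) (hW : Measurable W) (Z : Ω → β)
    (hind : IndepFun W Z ℙ) (G : T → β → ℝ) (hG : ∀ t, Measurable (G t))
    (hInt : ∀ t, Integrable (fun ω => G t (Z ω)) ℙ) :
    ∫ ω, G (W ω) (Z ω) ∂ℙ = ∑ t : T, (ℙ (W ⁻¹' {t})).toReal * ∫ ω, G t (Z ω) ∂ℙ := by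
  classical
  have hmeq : (fun ω => G (W ω) (Z ω))
      = fun ω => ∑ t : T, (if W ω = t then (1 : ℝ) else 0) * G t (Z ω) := by
    funext ω
    simp [ite_mul, Finset.sum_ite_eq]
  have hindic : ∀ t : T, (fun ω => (if W ω = t then (1 : ℝ) else 0) * G t (Z ω))
      = (W ⁻¹' {t}).indicator (fun ω => G t (Z ω)) := by
    intro t; funext ω; by_cases h : W ω = t <;> simp [h, Set.indicator]
  have hint2 : ∀ t : T, Integrable (fun ω => (if W ω = t then (1 : ℝ) else 0) * G t (Z ω)) ℙ := by
    intro t; rw [hindic t]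
    exact (hInt t).indicator (hW (measurableSet_singleton t))
  rw [hmeq, integral_finset_sum _ (fun t _ => hint2 t)]
  refine Finset.sum_congr rfl fun t _ => ?_
  have hφ : Measurable (fun x : T => if x = t then (1 : ℝ) else 0) := measurable_of_countable _
  have hi : IndepFun (fun ω => if W ω = t then (1 : ℝ) else 0) (fun ω => G t (Z ω)) ℙ :=
    hind.comp hφ (hG t)
  have hintind : Integrable (fun ω => if W ω = t then (1 : ℝ) else 0) ℙ := by
    have : (fun ω => if W ω = t then (1 : ℝ) else 0)
        = (W ⁻¹' {t}).indicator (fun _ => (1 : ℝ)) := by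
      funext ω; by_cases h : W ω = t <;> simp [h, Set.indicator]
    rw [this]
    exact (integrable_const (1 : ℝ)).indicator (hW (measurableSet_singleton t))
  have hmul := hi.integral_mul_eq_mul_integral hintind.aestronglyMeasurable (hInt t).aestronglyMeasurable
  have hlhs : ∫ ω, (if W ω = t then (1 : ℝ) else 0) * G t (Z ω) ∂ℙ
      = (∫ ω, (if W ω = t then (1 : ℝ) else 0) ∂ℙ) * ∫ ω, G t (Z ω) ∂ℙ := hmul
  rw [hlhs]
  congr 1
  have : (fun ω => if W ω = t then (1 : ℝ) else 0)
      = (W ⁻¹' {t}).indicator (fun _ => (1 : ℝ)) := by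
    funext ω; by_cases h : W ω = t <;> simp [h, Set.indicator]
  rw [this, integral_indicator_const (1 : ℝ) (hW (measurableSet_singleton t))]
  simp
  rfl

end Helpers

open MeasureTheory ProbabilityTheory Finset in
/-- Variance of Monte-Carlo cross-validation, second form: with splits `Eset j` i.i.d.,
uniform over the subsets of `{1,…,n}` of cardinality `n_e`, and independent of the i.i.d.
sample `D`,
`Var(R̂^vc) = Var(R̂^lpo) + (1/V) [Var(R̂^val(E₁)) − Var(R̂^lpo)]`;
in particular the variance is a nonincreasing affine function of `1/V` interpolating
between the hold-out variance and the leave-`(n−n_e)`-out variance. -/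
theorem stmt11 {𝒳 𝒴 Ω : Type*} [MeasurableSpace 𝒳] [MeasurableSpace 𝒴]
    [MeasureSpace Ω] [IsProbabilityMeasure (ℙ : Measure Ω)]
    (P : Measure (𝒳 × 𝒴)) [IsProbabilityMeasure P]
    (c : 𝒴 → 𝒴 → ℝ)
    (fhat : (k : ℕ) → (Fin k → 𝒳 × 𝒴) → 𝒳 → 𝒴)
    (hc : ∀ k, Measurable (fun q : (Fin k → 𝒳 × 𝒴) × (𝒳 × 𝒴) => c (fhat k q.1 q.2.1) q.2.2))
    {n n_e V : ℕ} (hV : 0 < V) (hne : 1 ≤ n_e) (hn : n_e < n)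
    (D : Ω → Fin n → 𝒳 × 𝒴) (hD : Measurable D)
    (hlaw : Measure.map D ℙ = Measure.pi fun _ => P)
    (Eset : Fin V → Ω → Finset (Fin n)) (hEmeas : ∀ j, Measurable (Eset j))
    (hEcard : ∀ j ω, (Eset j ω).card = n_e)
    (hEindep : iIndepFun Eset ℙ)
    (hEid : ∀ j j', IdentDistrib (Eset j) (Eset j') ℙ ℙ)
    (hEunif : ∀ j, ∀ s s' : Finset (Fin n), s.card = n_e → s'.card = n_e →
      ℙ {ω | Eset j ω = s} = ℙ {ω | Eset j ω = s'})
    (hindep : IndepFun (fun ω j => Eset j ω) D ℙ)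
    (hL2 : ∀ j, MemLp (fun ω => holdout c fhat (Eset j ω) (D ω)) 2 ℙ)
    (hL2' : ∀ s : Finset (Fin n), MemLp (fun ω => holdout c fhat s (D ω)) 2 ℙ) :
    variance (fun ω => (V : ℝ)⁻¹ * ∑ j, holdout c fhat (Eset j ω) (D ω)) ℙ
      = variance (fun ω => lpo c fhat n_e (D ω)) ℙ
        + (V : ℝ)⁻¹ *
          (variance (fun ω => holdout c fhat (Eset ⟨0, hV⟩ ω) (D ω)) ℙ
            - variance (fun ω => lpo c fhat n_e (D ω)) ℙ)
    ∧ variance (fun ω => lpo c fhat n_e (D ω)) ℙ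
        ≤ variance (fun ω => holdout c fhat (Eset ⟨0, hV⟩ ω) (D ω)) ℙ := by
  classical
  haveI : MeasurableSingletonClass (Finset (Fin n)) := ⟨fun _ => trivial⟩
  set S : Finset (Finset (Fin n)) := Finset.powersetCard n_e Finset.univ with hSdef
  set N : ℕ := S.card with hNdef
  have hNpos : 0 < N := by
    rw [hNdef, hSdef, Finset.card_powersetCard, Finset.card_univ, Fintype.card_fin]
    exact Nat.choose_pos hn.le
  have hNne : (N : ℝ) ≠ 0 := Nat.cast_ne_zero.mpr hNpos.ne'
  have hVne : (V : ℝ) ≠ 0 := Nat.cast_ne_zero.mpr hV.ne'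
  set a : Finset (Fin n) → Ω → ℝ := fun s ω => holdout c fhat s (D ω) with hadef
  set X : Fin V → Ω → ℝ := fun j ω => holdout c fhat (Eset j ω) (D ω) with hXdef
  set L : Ω → ℝ := fun ω => lpo c fhat n_e (D ω) with hLdef
  have hLeq : ∀ ω, L ω = (N : ℝ)⁻¹ * ∑ s ∈ S, a s ω := fun ω => rfl
  have hmh : ∀ s : Finset (Fin n), Measurable fun d : Fin n → 𝒳 × 𝒴 => holdout c fhat s d :=
    measurable_holdout' c fhat hc
  -- membership of the splits in S
  have hmemS : ∀ (j : Fin V) (ω : Ω), Eset j ω ∈ S := by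
    intro j ω
    rw [hSdef, Finset.mem_powersetCard]
    exact ⟨Finset.subset_univ _, hEcard j ω⟩
  -- uniform probabilities
  have hpr : ∀ (j : Fin V) (s : Finset (Fin n)), s ∈ S →
      (ℙ (Eset j ⁻¹' {s})).toReal = (N : ℝ)⁻¹ := by
    intro j s hs
    have hdisj : (↑S : Set (Finset (Fin n))).PairwiseDisjoint fun t => Eset j ⁻¹' {t} := by
      intro t _ t' _ htt'
      rw [Function.onFun, Set.disjoint_left]
      intro ω h1 h2
      simp only [Set.mem_preimage, Set.mem_singleton_iff] at h1 h2
      exact htt' (h1 ▸ h2)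
    have hsum : ∑ t ∈ S, ℙ (Eset j ⁻¹' {t}) = 1 := by
      rw [← measure_biUnion_finset hdisj (fun t _ => hEmeas j (measurableSet_singleton t))]
      have hcov : (⋃ t ∈ S, Eset j ⁻¹' {t}) = Set.univ := by
        ext ω
        simp only [Set.mem_iUnion, Set.mem_preimage, Set.mem_singleton_iff, Set.mem_univ,
          iff_true]
        exact ⟨Eset j ω, hmemS j ω, rfl⟩
      rw [hcov, measure_univ]
    have hconst : ∀ t ∈ S, ℙ (Eset j ⁻¹' {t}) = ℙ (Eset j ⁻¹' {s}) := by
      intro t ht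
      have h1 : t.card = n_e := (Finset.mem_powersetCard.mp ht).2
      have h2 : s.card = n_e := (Finset.mem_powersetCard.mp hs).2
      have h := hEunif j t s h1 h2
      have e1 : {ω | Eset j ω = t} = Eset j ⁻¹' {t} := rfl
      have e2 : {ω | Eset j ω = s} = Eset j ⁻¹' {s} := rfl
      rw [e1, e2] at h
      exact h
    rw [Finset.sum_congr rfl hconst, Finset.sum_const, nsmul_eq_mul, ← hNdef] at hsum
    have hN0 : (N : ENNReal) ≠ 0 := by
      simpa using hNpos.ne'
    have hNtop : (N : ENNReal) ≠ ⊤ := ENNReal.natCast_ne_top N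
    have hp : ℙ (Eset j ⁻¹' {s}) = (N : ENNReal)⁻¹ := by
      calc ℙ (Eset j ⁻¹' {s}) = (N : ENNReal)⁻¹ * ((N : ENNReal) * ℙ (Eset j ⁻¹' {s})) := by
            rw [← mul_assoc, ENNReal.inv_mul_cancel hN0 hNtop, one_mul]
        _ = (N : ENNReal)⁻¹ := by rw [hsum, mul_one]
    rw [hp, ENNReal.toReal_inv]
    simp
  have hpr0 : ∀ (j : Fin V) (s : Finset (Fin n)), s ∉ S → ℙ (Eset j ⁻¹' {s}) = 0 := by
    intro j s hs
    have hempty : Eset j ⁻¹' {s} = ∅ := by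
      ext ω
      simp only [Set.mem_preimage, Set.mem_singleton_iff, Set.mem_empty_iff_false, iff_false]
      intro h
      exact hs (h ▸ hmemS j ω)
    simp [hempty]
  -- marginal independence
  have hIndj : ∀ j : Fin V, IndepFun (Eset j) D ℙ := by
    intro j
    exact hindep.comp (measurable_pi_apply j) measurable_id
  -- generic single-split expectation
  have hsingle : ∀ (j : Fin V) (G : Finset (Fin n) → (Fin n → 𝒳 × 𝒴) → ℝ),
      (∀ s, Measurable (G s)) → (∀ s, Integrable (fun ω => G s (D ω)) ℙ) →
      ∫ ω, G (Eset j ω) (D ω) ∂ℙ = (N : ℝ)⁻¹ * ∑ s ∈ S, ∫ ω, G s (D ω) ∂ℙ := by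
    intro j G hG hInt
    rw [integral_comp_finite (Eset j) (hEmeas j) D (hIndj j) G hG hInt]
    rw [show (∑ t : Finset (Fin n), (ℙ (Eset j ⁻¹' {t})).toReal * ∫ ω, G t (D ω) ∂ℙ)
        = ∑ t ∈ S, (ℙ (Eset j ⁻¹' {t})).toReal * ∫ ω, G t (D ω) ∂ℙ from
      (Finset.sum_subset (Finset.subset_univ S)
        (fun t _ ht => by rw [hpr0 j t ht]; simp)).symm]
    rw [Finset.mul_sum]
    exact Finset.sum_congr rfl fun s hs => by rw [hpr j s hs]
  -- basic moments
  have hintas : ∀ s, Integrable (a s) ℙ := fun s => (hL2' s).integrable one_le_two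
  have hintas2 : ∀ s, Integrable (fun ω => a s ω ^ 2) ℙ := fun s => (hL2' s).integrable_sq
  have hintmul : ∀ s t, Integrable (fun ω => a s ω * a t ω) ℙ := fun s t =>
    integrable_mul_of_memL2 (hL2' s) (hL2' t)
  set m0 : ℝ := (N : ℝ)⁻¹ * ∑ s ∈ S, ∫ ω, a s ω ∂ℙ with hm0def
  set A : ℝ := (N : ℝ)⁻¹ * ∑ s ∈ S, ∫ ω, a s ω ^ 2 ∂ℙ with hAdef
  set Q : ℝ := ∑ s ∈ S, ∑ t ∈ S, ∫ ω, a s ω * a t ω ∂ℙ with hQdef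
  set B : ℝ := (N : ℝ)⁻¹ * ((N : ℝ)⁻¹ * Q) with hBdef
  -- expectations of X j
  have hEX : ∀ j, ∫ ω, X j ω ∂ℙ = m0 := by
    intro j
    exact hsingle j (fun s d => holdout c fhat s d) hmh hintas
  have hEX2 : ∀ j, ∫ ω, X j ω ^ 2 ∂ℙ = A := by
    intro j
    exact hsingle j (fun s d => holdout c fhat s d ^ 2)
      (fun s => (hmh s).pow_const 2) hintas2
  -- expectations of L
  have hEL : ∫ ω, L ω ∂ℙ = m0 := by
    rw [show (fun ω => L ω) = fun ω => (N : ℝ)⁻¹ * ∑ s ∈ S, a s ω from funext hLeq]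
    rw [integral_const_mul, integral_finset_sum _ (fun s _ => hintas s)]
  have hEL2 : ∫ ω, L ω ^ 2 ∂ℙ = B := by
    have hsq : ∀ ω, L ω ^ 2 = (N : ℝ)⁻¹ * ((N : ℝ)⁻¹ * ∑ s ∈ S, ∑ t ∈ S, a s ω * a t ω) := by
      intro ω
      rw [hLeq, mul_pow, pow_two (∑ s ∈ S, a s ω), Finset.sum_mul_sum]
      ring
    rw [show (fun ω => L ω ^ 2)
        = fun ω => (N : ℝ)⁻¹ * ((N : ℝ)⁻¹ * ∑ s ∈ S, ∑ t ∈ S, a s ω * a t ω) from funext hsq]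
    rw [integral_const_mul, integral_const_mul,
      integral_finset_sum _ (fun s _ => integrable_finset_sum _ (fun t _ => hintmul s t))]
    rw [hBdef, hQdef]
    congr 2
    exact Finset.sum_congr rfl fun s _ =>
      integral_finset_sum _ (fun t _ => hintmul s t)
  -- cross moments
  have hcross : ∀ j k : Fin V, j ≠ k → ∫ ω, X j ω * X k ω ∂ℙ = B := by
    intro j k hjk
    have hW : Measurable (fun ω => (Eset j ω, Eset k ω)) := (hEmeas j).prodMk (hEmeas k)
    have hInd : IndepFun (fun ω => (Eset j ω, Eset k ω)) D ℙ := by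
      have hφ : Measurable (fun v : Fin V → Finset (Fin n) => (v j, v k)) :=
        (measurable_pi_apply j).prodMk (measurable_pi_apply k)
      exact hindep.comp hφ measurable_id
    have h0 := integral_comp_finite (fun ω => (Eset j ω, Eset k ω)) hW D hInd
      (fun p d => holdout c fhat p.1 d * holdout c fhat p.2 d)
      (fun p => (hmh p.1).mul (hmh p.2))
      (fun p => hintmul p.1 p.2)
    have hjointpre : ∀ s t : Finset (Fin n),
        (fun ω => (Eset j ω, Eset k ω)) ⁻¹' {(s, t)}
          = (Eset j ⁻¹' {s}) ∩ (Eset k ⁻¹' {t}) := by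
      intro s t
      ext ω
      simp [Prod.ext_iff]
    have hjoint : ∀ s t : Finset (Fin n),
        ℙ ((fun ω => (Eset j ω, Eset k ω)) ⁻¹' {(s, t)})
          = ℙ (Eset j ⁻¹' {s}) * ℙ (Eset k ⁻¹' {t}) := by
      intro s t
      rw [hjointpre s t]
      exact (hEindep.indepFun hjk).measure_inter_preimage_eq_mul {s} {t} trivial trivial
    rw [h0]
    rw [Fintype.sum_prod_type]
    have hrestr : (∑ s : Finset (Fin n), ∑ t : Finset (Fin n),
          (ℙ ((fun ω => (Eset j ω, Eset k ω)) ⁻¹' {(s, t)})).toReal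
            * ∫ ω, holdout c fhat s (D ω) * holdout c fhat t (D ω) ∂ℙ)
        = ∑ s ∈ S, ∑ t ∈ S, (N : ℝ)⁻¹ * (N : ℝ)⁻¹ * ∫ ω, a s ω * a t ω ∂ℙ := by
      rw [show (∑ s : Finset (Fin n), ∑ t : Finset (Fin n),
            (ℙ ((fun ω => (Eset j ω, Eset k ω)) ⁻¹' {(s, t)})).toReal
              * ∫ ω, holdout c fhat s (D ω) * holdout c fhat t (D ω) ∂ℙ)
          = ∑ s ∈ S, ∑ t : Finset (Fin n),
            (ℙ ((fun ω => (Eset j ω, Eset k ω)) ⁻¹' {(s, t)})).toReal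
              * ∫ ω, holdout c fhat s (D ω) * holdout c fhat t (D ω) ∂ℙ from
        (Finset.sum_subset (Finset.subset_univ S) (fun s _ hs => by
          apply Finset.sum_eq_zero
          intro t _
          rw [hjoint s t, hpr0 j s hs]
          simp)).symm]
      refine Finset.sum_congr rfl fun s hs => ?_
      rw [show (∑ t : Finset (Fin n),
            (ℙ ((fun ω => (Eset j ω, Eset k ω)) ⁻¹' {(s, t)})).toReal
              * ∫ ω, holdout c fhat s (D ω) * holdout c fhat t (D ω) ∂ℙ)
          = ∑ t ∈ S, (ℙ ((fun ω => (Eset j ω, Eset k ω)) ⁻¹' {(s, t)})).toReal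
              * ∫ ω, holdout c fhat s (D ω) * holdout c fhat t (D ω) ∂ℙ from
        (Finset.sum_subset (Finset.subset_univ S) (fun t _ ht => by
          rw [hjoint s t, hpr0 k t ht]
          simp)).symm]
      refine Finset.sum_congr rfl fun t ht => ?_
      rw [hjoint s t, ENNReal.toReal_mul, hpr j s hs, hpr k t ht]
    rw [hrestr, hBdef, hQdef]
    simp only [Finset.mul_sum]
    refine Finset.sum_congr rfl fun s _ => Finset.sum_congr rfl fun t _ => by ring
  -- Memℒp facts
  have hMemL : MemLp L 2 ℙ := by
    rw [show L = fun ω => (N : ℝ)⁻¹ * ∑ s ∈ S, a s ω from funext hLeq]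
    exact (memLp_finsetSum S (fun s _ => hL2' s)).const_mul _
  have hMemX : ∀ j, MemLp (X j) 2 ℙ := fun j => hL2 j
  have hMemY : MemLp (fun ω => (V : ℝ)⁻¹ * ∑ j, X j ω) 2 ℙ :=
    (memLp_finsetSum Finset.univ (fun j _ => hL2 j)).const_mul _
  -- variances
  have hVarL : variance L ℙ = B - m0 ^ 2 := by
    rw [variance_eq_sub hMemL]
    have h1 : (∫ ω, (L ^ 2) ω ∂ℙ) = ∫ ω, L ω ^ 2 ∂ℙ := by
      congr 1
    rw [h1, hEL2, hEL]
  have hVarX : variance (X ⟨0, hV⟩) ℙ = A - m0 ^ 2 := by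
    rw [variance_eq_sub (hMemX ⟨0, hV⟩)]
    have h1 : (∫ ω, (X ⟨0, hV⟩ ^ 2) ω ∂ℙ) = ∫ ω, X ⟨0, hV⟩ ω ^ 2 ∂ℙ := by
      congr 1
    rw [h1, hEX2, hEX]
  -- expectations of Y
  have hintX : ∀ j, Integrable (X j) ℙ := fun j => (hL2 j).integrable one_le_two
  have hEY : ∫ ω, (V : ℝ)⁻¹ * ∑ j, X j ω ∂ℙ = m0 := by
    rw [integral_const_mul, integral_finset_sum _ (fun j _ => hintX j)]
    rw [Finset.sum_congr rfl (fun j _ => hEX j), Finset.sum_const, Finset.card_univ,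
      Fintype.card_fin, nsmul_eq_mul]
    field_simp
  have hEY2 : ∫ ω, ((V : ℝ)⁻¹ * ∑ j, X j ω) ^ 2 ∂ℙ = B + (V : ℝ)⁻¹ * (A - B) := by
    have hsq : ∀ ω, ((V : ℝ)⁻¹ * ∑ j, X j ω) ^ 2
        = (V : ℝ)⁻¹ * ((V : ℝ)⁻¹ * ∑ j, ∑ k, X j ω * X k ω) := by
      intro ω
      rw [mul_pow, pow_two (∑ j, X j ω), Finset.sum_mul_sum]
      ring
    rw [show (fun ω => ((V : ℝ)⁻¹ * ∑ j, X j ω) ^ 2)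
        = fun ω => (V : ℝ)⁻¹ * ((V : ℝ)⁻¹ * ∑ j, ∑ k, X j ω * X k ω) from funext hsq]
    rw [integral_const_mul, integral_const_mul,
      integral_finset_sum _ (fun j _ => integrable_finset_sum _
        (fun k _ => integrable_mul_of_memL2 (hL2 j) (hL2 k)))]
    have hterm : ∀ j : Fin V, (∫ ω, ∑ k, X j ω * X k ω ∂ℙ) = (V : ℝ) * B + (A - B) := by
      intro j
      rw [integral_finset_sum _ (fun k _ => integrable_mul_of_memL2 (hL2 j) (hL2 k))]
      have hval : ∀ k : Fin V, (∫ ω, X j ω * X k ω ∂ℙ) = if j = k then A else B := by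
        intro k
        by_cases h : j = k
        · subst h
          simp only [if_true]
          rw [show (fun ω => X j ω * X j ω) = fun ω => X j ω ^ 2 from funext fun ω => (sq _).symm]
          exact hEX2 j
        · rw [if_neg h]
          exact hcross j k h
      rw [Finset.sum_congr rfl (fun k _ => hval k)]
      have hsplit : ∀ k : Fin V, (if j = k then A else B) = B + (if j = k then A - B else 0) := by
        intro k; by_cases h : j = k <;> simp [h]
      rw [Finset.sum_congr rfl (fun k _ => hsplit k), Finset.sum_add_distrib,
        Finset.sum_const, Finset.sum_ite_eq, Finset.card_univ, Fintype.card_fin,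
        nsmul_eq_mul]
      simp
    rw [Finset.sum_congr rfl (fun j _ => hterm j), Finset.sum_const, Finset.card_univ,
      Fintype.card_fin, nsmul_eq_mul]
    field_simp
  have hVarY : variance (fun ω => (V : ℝ)⁻¹ * ∑ j, X j ω) ℙ
      = B + (V : ℝ)⁻¹ * (A - B) - m0 ^ 2 := by
    rw [variance_eq_sub hMemY]
    have h1 : (∫ ω, ((fun ω => (V : ℝ)⁻¹ * ∑ j, X j ω) ^ 2) ω ∂ℙ)
        = ∫ ω, ((V : ℝ)⁻¹ * ∑ j, X j ω) ^ 2 ∂ℙ := by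
      congr 1
    rw [h1, hEY2, hEY]
  -- the inequality B ≤ A
  have hBA : B ≤ A := by
    have hpt : ∀ ω, L ω ^ 2 ≤ (N : ℝ)⁻¹ * ∑ s ∈ S, a s ω ^ 2 := by
      intro ω
      rw [hLeq, mul_pow]
      have h := sq_sum_le_card_mul_sum_sq (s := S) (f := fun s => a s ω)
      have h' : (∑ s ∈ S, a s ω) ^ 2 ≤ (N : ℝ) * ∑ s ∈ S, a s ω ^ 2 := by
        exact_mod_cast h
      calc ((N : ℝ)⁻¹) ^ 2 * (∑ s ∈ S, a s ω) ^ 2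
          ≤ ((N : ℝ)⁻¹) ^ 2 * ((N : ℝ) * ∑ s ∈ S, a s ω ^ 2) := by
            apply mul_le_mul_of_nonneg_left h' (by positivity)
        _ = (N : ℝ)⁻¹ * ∑ s ∈ S, a s ω ^ 2 := by
            field_simp
    have h1 : Integrable (fun ω => L ω ^ 2) ℙ := hMemL.integrable_sq
    have h2 : Integrable (fun ω => (N : ℝ)⁻¹ * ∑ s ∈ S, a s ω ^ 2) ℙ :=
      (integrable_finset_sum S (fun s _ => hintas2 s)).const_mul _
    have hmono := integral_mono h1 h2 hpt
    calc B = ∫ ω, L ω ^ 2 ∂ℙ := hEL2.symm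
      _ ≤ ∫ ω, (N : ℝ)⁻¹ * ∑ s ∈ S, a s ω ^ 2 ∂ℙ := hmono
      _ = A := by
          rw [integral_const_mul, integral_finset_sum _ (fun s _ => hintas2 s)]
  -- conclusion
  constructor
  · show variance (fun ω => (V : ℝ)⁻¹ * ∑ j, X j ω) ℙ
      = variance L ℙ + (V : ℝ)⁻¹ * (variance (X ⟨0, hV⟩) ℙ - variance L ℙ)
    rw [hVarY, hVarL, hVarX]
    ring
  · show variance L ℙ ≤ variance (X ⟨0, hV⟩) ℙ
    rw [hVarL, hVarX]
    linarith
end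

section
/- In binary classification with 0–1 loss, the majority-vote rule on the trivial partition (predict the majority label of the training sample, breaking ties by predicting label 0) is not a smart rule: there exists a distribution P and an n such that the expected risk with n+1 observations is strictly greater than with n observations. -/
open MeasureTheory ProbabilityTheory

noncomputable section

/-- Majority label of a sample of labels in `Bool`: `true` iff strictly more than half of
the labels are `true` (exact ties give `false`, i.e. label `0`). -/
def maj (k : ℕ) (y : Fin k → Bool) : Bool :=
  decide (k < 2 * ∑ i, (if y i then 1 else 0 : ℕ))

/-- Mean risk (for the 0–1 loss) of the majority-vote rule on the trivial partition,
trained on an i.i.d. sample of size `n` with law `P` (covariate space `Unit`, i.e. a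
degenerate covariate): the predictor is the constant `maj` of the observed labels and its
risk is `P {(x, y) | y ≠ maj}`. -/
def majMeanRisk (P : Measure (Unit × Bool)) (n : ℕ) : ℝ :=
  ∫ d : Fin n → Unit × Bool,
    (P {z : Unit × Bool | z.2 ≠ maj n fun i => (d i).2}).toReal
    ∂(Measure.pi fun _ : Fin n => P)

/-- The majority-vote rule on the trivial partition (with ties broken towards label `0`)
is not a smart rule: there is a data distribution `P` and a sample size `n` such that the
mean risk with `n + 1` observations is strictly larger than with `n` observations. -/
theorem stmt17 :
    ∃ P : Measure (Unit × Bool), IsProbabilityMeasure P ∧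
      ∃ n : ℕ, majMeanRisk P n < majMeanRisk P (n + 1) := by
  set P : Measure (Unit × Bool) :=
    (1/4 : ENNReal) • Measure.dirac ((), true) + (3/4 : ENNReal) • Measure.dirac ((), false) with hP
  have hsum : (1/4 : ENNReal) + 3/4 = 1 := by
    rw [ENNReal.div_add_div_same]; norm_num
    exact ENNReal.div_self (by norm_num) (by norm_num)
  have hprob : IsProbabilityMeasure P := by
    constructor
    simp only [hP, Measure.add_apply, Measure.smul_apply, measure_univ, smul_eq_mul, mul_one]
    exact hsum
  have hPt : P {z : Unit × Bool | z.2 = true} = 1/4 := by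
    simp [hP, Measure.add_apply, Measure.smul_apply, Measure.dirac_apply]
  have hPf : P {z : Unit × Bool | z.2 = false} = 3/4 := by
    simp [hP, Measure.add_apply, Measure.smul_apply, Measure.dirac_apply]
  refine ⟨P, hprob, 0, ?_⟩
  have h0 : majMeanRisk P 0 = (1/4 : ℝ) := by
    have : majMeanRisk P 0
        = ∫ _ : Fin 0 → Unit × Bool, (P {z : Unit × Bool | z.2 = true}).toReal
          ∂(Measure.pi fun _ : Fin 0 => P) := by
      unfold majMeanRisk
      congr 1
      funext d
      congr 1
      simp [maj]
    rw [this, integral_const, hPt]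
    simp
  have h1 : majMeanRisk P 1 = (3/8 : ℝ) := by
    have hcomp : majMeanRisk P 1
        = ∫ z : Unit × Bool, (P {w : Unit × Bool | w.2 ≠ z.2}).toReal ∂P := by
      unfold majMeanRisk
      rw [← (measurePreserving_funUnique P (Fin 1)).integral_comp
        (MeasurableEquiv.funUnique (Fin 1) (Unit × Bool)).measurableEmbedding
        (fun z => (P {w : Unit × Bool | w.2 ≠ z.2}).toReal)]
      congr 1
      funext d
      congr 2
      funext w
      simp only [MeasurableEquiv.funUnique_apply]
      congr 1
      have : maj 1 (fun i => (d i).2) = (d default).2 := by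
        show _ = (d 0).2
        rcases Bool.dichotomy (d 0).2 with h | h <;> simp [maj, Fin.sum_univ_one, Finset.filter_singleton, h]
      rw [this]
    haveI h1 : IsFiniteMeasure ((1/4 : ENNReal) • (Measure.dirac ((), true) : Measure (Unit × Bool))) := by
      refine ⟨?_⟩
      rw [Measure.smul_apply, measure_univ, smul_eq_mul, mul_one]
      exact ENNReal.div_lt_top (by norm_num) (by norm_num)
    haveI h2 : IsFiniteMeasure ((3/4 : ENNReal) • (Measure.dirac ((), false) : Measure (Unit × Bool))) := by
      refine ⟨?_⟩
      rw [Measure.smul_apply, measure_univ, smul_eq_mul, mul_one]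
      exact ENNReal.div_lt_top (by norm_num) (by norm_num)
    rw [hcomp, hP]
    rw [integral_add_measure Integrable.of_finite Integrable.of_finite,
      integral_smul_measure, integral_smul_measure, integral_dirac, integral_dirac]
    have hne : ({w : Unit × Bool | w.2 ≠ true} : Set (Unit × Bool))
        = {z : Unit × Bool | z.2 = false} := by
      ext w; simp
    have hne' : ({w : Unit × Bool | w.2 ≠ false} : Set (Unit × Bool))
        = {z : Unit × Bool | z.2 = true} := by
      ext w; simp
    simp only [hne, hne', ← hP, hPt, hPf]
    norm_num [ENNReal.toReal_ofNat, smul_eq_mul]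
  rw [h0, h1]
  norm_num

end
end

section
/- In binary classification with 0–1 loss, the randomized majority-vote rule on the trivial partition (predict the majority label; in case of an exact tie, predict 1 with probability 1/2 independently of the data) is a smart rule: for every distribution P, the map n ↦ E[R_P(f̃(D_n))] (expectation over both the sample and the internal randomization) is nonincreasing. -/
open MeasureTheory ProbabilityTheory

noncomputable section

/-- Mean risk (for the 0–1 loss) of the randomized majority-vote rule on the trivial
partition, trained on an i.i.d. sample of size `n` with law `P` on `𝒳 × Bool`: with
`S = #{i | Yᵢ = true}`, the rule predicts `true` if `2S > n`, `false` if `2S < n`, and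
each label with probability `1/2` (independent randomization) if `2S = n`; the expectation
is taken over both the sample and the internal randomization. -/
def rmajMeanRisk {𝒳 : Type*} [MeasurableSpace 𝒳] (P : Measure (𝒳 × Bool)) (n : ℕ) : ℝ :=
  ∫ d : Fin n → 𝒳 × Bool,
    (if n < 2 * ∑ i, (if (d i).2 then 1 else 0 : ℕ) then
        (P {z : 𝒳 × Bool | z.2 ≠ true}).toReal
      else if 2 * ∑ i, (if (d i).2 then 1 else 0 : ℕ) < n then
        (P {z : 𝒳 × Bool | z.2 ≠ false}).toReal
      else
        ((P {z : 𝒳 × Bool | z.2 ≠ true}).toReal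
          + (P {z : 𝒳 × Bool | z.2 ≠ false}).toReal) / 2)
    ∂(Measure.pi fun _ : Fin n => P)

namespace Stmt18Aux

/-- number of `true`s -/
def cnt {n : ℕ} (x : Fin n → Bool) : ℕ := ∑ i, (if x i then 1 else 0)

/-- the risk given the count -/
def G (a b : ℝ) (n k : ℕ) : ℝ :=
  if n < 2 * k then a else if 2 * k < n then b else (a + b) / 2

/-- the weight of a configuration -/
def W (a b : ℝ) {n : ℕ} (x : Fin n → Bool) : ℝ := ∏ i, (if x i then b else a)

/-- one-step difference of the risk as a function of the count -/
def D (a b : ℝ) (n k : ℕ) : ℝ :=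
  b * G a b (n + 1) (k + 1) + a * G a b (n + 1) k - G a b n k

lemma G_hi (a b : ℝ) {n k : ℕ} (h : n < 2 * k) : G a b n k = a := by
  unfold G; rw [if_pos h]

lemma G_lo (a b : ℝ) {n k : ℕ} (h : 2 * k < n) : G a b n k = b := by
  unfold G; rw [if_neg (by omega), if_pos h]

lemma G_mid (a b : ℝ) {n k : ℕ} (h : 2 * k = n) : G a b n k = (a + b) / 2 := by
  unfold G; rw [if_neg (by omega), if_neg (by omega)]

lemma cnt_le {n : ℕ} (x : Fin n → Bool) : cnt x ≤ n := by
  classical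
  calc cnt x ≤ ∑ _i : Fin n, 1 := Finset.sum_le_sum (fun i _ => by split <;> omega)
  _ = n := by simp

lemma cnt_cons {n : ℕ} (t : Bool) (x : Fin n → Bool) :
    cnt (Fin.cons t x) = (if t then 1 else 0) + cnt x := by
  rw [cnt, Fin.sum_univ_succ]
  simp [cnt]

lemma W_cons (a b : ℝ) {n : ℕ} (t : Bool) (x : Fin n → Bool) :
    W a b (Fin.cons t x) = (if t then b else a) * W a b x := by
  rw [W, Fin.prod_univ_succ]
  simp [W]

lemma W_nonneg {a b : ℝ} (ha : 0 ≤ a) (hb : 0 ≤ b) {n : ℕ} (x : Fin n → Bool) :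
    0 ≤ W a b x :=
  Finset.prod_nonneg fun i _ => by split <;> assumption

lemma W_eq (a b : ℝ) {n : ℕ} (x : Fin n → Bool) :
    W a b x = b ^ cnt x * a ^ (n - cnt x) := by
  classical
  rw [W, Finset.prod_ite]
  have h1 : (Finset.univ.filter fun i => x i = true).card = cnt x := by
    rw [cnt, Finset.card_filter]
  have h2 : (Finset.univ.filter fun i => ¬ x i = true).card = n - cnt x := by
    have := Finset.card_filter_add_card_filter_not
      (s := (Finset.univ : Finset (Fin n))) (p := fun i => x i = true)
    simp only [Finset.card_univ, Fintype.card_fin] at this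
    omega
  simp only [Finset.prod_const, h1, h2]

lemma cnt_flip {n : ℕ} (x : Fin n → Bool) : cnt (fun i => !x i) = n - cnt x := by
  have h : cnt (fun i => !x i) + cnt x = n := by
    rw [cnt, cnt, ← Finset.sum_add_distrib]
    have h1 : ∀ i ∈ (Finset.univ : Finset (Fin n)),
        ((if (!x i) then 1 else 0) + if x i then 1 else 0) = 1 := by
      intro i _; cases x i <;> simp
    rw [Finset.sum_congr rfl h1]
    simp
  have := cnt_le x
  omega

/-- The key combinatorial inequality. -/
lemma key (a b : ℝ) (ha : 0 ≤ a) (hb : 0 ≤ b) (hab : a + b = 1) (n : ℕ) :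
    ∑ x : Fin (n + 1) → Bool, W a b x * G a b (n + 1) (cnt x)
      ≤ ∑ x : Fin n → Bool, W a b x * G a b n (cnt x) := by
  classical
  have hL : ∑ x : Fin (n + 1) → Bool, W a b x * G a b (n + 1) (cnt x)
      = ∑ x : Fin n → Bool, W a b x *
          (b * G a b (n + 1) (cnt x + 1) + a * G a b (n + 1) (cnt x)) := by
    rw [← Fintype.sum_equiv (Fin.consEquiv (fun _ => Bool))
      (fun p => W a b (Fin.cons p.1 p.2) * G a b (n + 1) (cnt (Fin.cons p.1 p.2)))
      (fun x => W a b x * G a b (n + 1) (cnt x)) (fun p => rfl)]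
    rw [Fintype.sum_prod_type, Fintype.sum_bool]
    rw [← Finset.sum_add_distrib]
    refine Finset.sum_congr rfl fun x _ => ?_
    rw [W_cons, W_cons, cnt_cons, cnt_cons]
    simp only [if_true, Bool.false_eq_true, if_false, Nat.zero_add]
    have h1 : (1 : ℕ) + cnt x = cnt x + 1 := by omega
    rw [h1]
    ring
  rw [hL, ← sub_nonpos, ← Finset.sum_sub_distrib]
  have hre : ∀ x : Fin n → Bool,
      W a b x * (b * G a b (n + 1) (cnt x + 1) + a * G a b (n + 1) (cnt x))
        - W a b x * G a b n (cnt x)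
      = W a b x * D a b n (cnt x) := fun x => by rw [D]; ring
  simp only [hre]
  -- values of D
  have Dlow : ∀ k : ℕ, 2 * k + 2 ≤ n → D a b n k = 0 := by
    intro k hk
    rw [D, G_lo a b (show 2 * (k + 1) < n + 1 by omega),
      G_lo a b (show 2 * k < n + 1 by omega), G_lo a b (show 2 * k < n by omega)]
    linear_combination b * hab
  have Dhigh : ∀ k : ℕ, n + 1 < 2 * k → D a b n k = 0 := by
    intro k hk
    rw [D, G_hi a b (show n + 1 < 2 * (k + 1) by omega),
      G_hi a b (show n + 1 < 2 * k by omega), G_hi a b (show n < 2 * k by omega)]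
    linear_combination a * hab
  rcases Nat.even_or_odd n with ⟨m, hm⟩ | ⟨m, hm⟩
  · -- even case : each term is nonpositive
    refine Finset.sum_nonpos fun x _ => ?_
    have hdle : D a b n (cnt x) ≤ 0 := by
      rcases lt_trichotomy (cnt x) m with h | h | h
      · rw [Dlow _ (by omega)]
      · have hD : D a b n (cnt x)
            = b * a + a * b - (a + b) / 2 := by
          rw [D, G_hi a b (show n + 1 < 2 * (cnt x + 1) by omega),
            G_lo a b (show 2 * cnt x < n + 1 by omega),
            G_mid a b (show 2 * cnt x = n by omega)]
        rw [hD]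
        nlinarith [sq_nonneg (a - b)]
      · rw [Dhigh _ (by omega)]
    exact mul_nonpos_of_nonneg_of_nonpos (W_nonneg ha hb x) hdle
  · -- odd case : the sum is zero, by the flipping involution
    have Dm : D a b n m = a * b - b / 2 := by
      rw [D, G_mid a b (show 2 * (m + 1) = n + 1 by omega),
        G_lo a b (show 2 * m < n + 1 by omega), G_lo a b (show 2 * m < n by omega)]
      linear_combination (b / 2) * hab
    have Dm1 : D a b n (m + 1) = a * b - a / 2 := by
      rw [D, G_hi a b (show n + 1 < 2 * (m + 1 + 1) by omega),
        G_mid a b (show 2 * (m + 1) = n + 1 by omega),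
        G_hi a b (show n < 2 * (m + 1) by omega)]
      linear_combination (a / 2) * hab
    have hzero :
        ∑ x : Fin n → Bool, W a b x * D a b n (cnt x) = 0 := by
      refine Finset.sum_ninvolution (fun x i => !x i) ?_ ?_ (fun x => Finset.mem_univ _) ?_
      · -- pair sums vanish
        intro x
        have hcle := cnt_le x
        rw [W_eq a b x, W_eq a b (fun i => !x i), cnt_flip]
        rcases lt_trichotomy (cnt x) m with h | h | h
        · rw [Dlow _ (by omega), Dhigh _ (by omega)]
          ring
        · have e1 : n - cnt x = m + 1 := by omega
          have e2 : n - (m + 1) = m := by omega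
          rw [e1, h, e2, Dm, Dm1]
          linear_combination (a ^ m * b ^ m * a * b) * hab
        · rcases Nat.eq_or_lt_of_le (Nat.succ_le_of_lt h) with h' | h'
          · have hc : cnt x = m + 1 := h'.symm
            have e1 : n - cnt x = m := by omega
            have e2 : n - m = m + 1 := by omega
            rw [e1, hc, e2, Dm, Dm1]
            linear_combination (a ^ m * b ^ m * a * b) * hab
          · rw [Dhigh _ (by omega), Dlow _ (by omega)]
            ring
      · -- the flip moves every point
        intro x _ h
        have h0 := congrFun h (⟨0, by omega⟩ : Fin n)
        simp at h0
      · -- flipping twice is the identity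
        intro x; funext i; simp
    rw [hzero]

section Repr

variable {𝒳 : Type*} [MeasurableSpace 𝒳] (P : Measure (𝒳 × Bool)) [IsProbabilityMeasure P]

lemma repr_sum (n : ℕ) :
    (∫ d : Fin n → 𝒳 × Bool,
      (if n < 2 * ∑ i, (if (d i).2 then 1 else 0 : ℕ) then
          (P {z : 𝒳 × Bool | z.2 ≠ true}).toReal
        else if 2 * ∑ i, (if (d i).2 then 1 else 0 : ℕ) < n then
          (P {z : 𝒳 × Bool | z.2 ≠ false}).toReal
        else
          ((P {z : 𝒳 × Bool | z.2 ≠ true}).toReal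
            + (P {z : 𝒳 × Bool | z.2 ≠ false}).toReal) / 2)
      ∂(Measure.pi fun _ : Fin n => P))
    = ∑ x : Fin n → Bool,
        W (P {z : 𝒳 × Bool | z.2 ≠ true}).toReal (P {z : 𝒳 × Bool | z.2 ≠ false}).toReal x
          * G (P {z : 𝒳 × Bool | z.2 ≠ true}).toReal (P {z : 𝒳 × Bool | z.2 ≠ false}).toReal
              n (cnt x) := by
  classical
  set a := (P {z : 𝒳 × Bool | z.2 ≠ true}).toReal with ha
  set b := (P {z : 𝒳 × Bool | z.2 ≠ false}).toReal with hb
  set ν := P.map Prod.snd with hν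
  haveI : IsProbabilityMeasure ν := Measure.isProbabilityMeasure_map measurable_snd.aemeasurable
  have hT : MeasurePreserving (fun d : Fin n → 𝒳 × Bool => fun i => (d i).2)
      (Measure.pi fun _ : Fin n => P) (Measure.pi fun _ : Fin n => ν) :=
    measurePreserving_pi _ _ (fun _ => measurable_snd.measurePreserving P)
  have hint : (∫ d : Fin n → 𝒳 × Bool,
      (fun x : Fin n → Bool => G a b n (cnt x)) (fun i => (d i).2)
      ∂(Measure.pi fun _ : Fin n => P))
      = ∫ x : Fin n → Bool, G a b n (cnt x) ∂(Measure.pi fun _ : Fin n => ν) := by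
    rw [← hT.map_eq]
    exact (integral_map (f := fun x : Fin n → Bool => G a b n (cnt x))
      hT.measurable.aemeasurable (measurable_of_countable _).aestronglyMeasurable).symm
  have hshape : (∫ d : Fin n → 𝒳 × Bool,
      (if n < 2 * ∑ i, (if (d i).2 then 1 else 0 : ℕ) then a
        else if 2 * ∑ i, (if (d i).2 then 1 else 0 : ℕ) < n then b
        else (a + b) / 2)
      ∂(Measure.pi fun _ : Fin n => P))
    = ∫ x : Fin n → Bool, G a b n (cnt x) ∂(Measure.pi fun _ : Fin n => ν) := hint
  rw [hshape]
  have hfin := integral_fintype (μ := (Measure.pi fun _ : Fin n => ν))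
    (f := fun x : Fin n → Bool => G a b n (cnt x)) Integrable.of_finite
  rw [hfin]
  refine Finset.sum_congr rfl fun x _ => ?_
  have hsing : ((Measure.pi fun _ : Fin n => ν) {x}).toReal = W a b x := by
    rw [← Set.univ_pi_singleton x, Measure.pi_pi, ENNReal.toReal_prod, W]
    refine Finset.prod_congr rfl fun i _ => ?_
    cases hxi : x i
    · have : ν {false} = P {z : 𝒳 × Bool | z.2 ≠ true} := by
        rw [hν, Measure.map_apply measurable_snd (measurableSet_singleton _)]
        congr 1
        ext z
        simp
      simp only [Bool.false_eq_true, if_false]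
      rw [this]
    · have : ν {true} = P {z : 𝒳 × Bool | z.2 ≠ false} := by
        rw [hν, Measure.map_apply measurable_snd (measurableSet_singleton _)]
        congr 1
        ext z
        simp
      simp only [if_true]
      rw [this]
  rw [measureReal_def, hsing, smul_eq_mul]

end Repr

end Stmt18Aux

/-- The randomized majority-vote rule on the trivial partition (predict the majority
label, and in case of an exact tie predict `true` with probability `1/2` independently of
the data) is a smart rule: for every data distribution `P`, its mean risk is a
nonincreasing function of the sample size. -/
theorem stmt18 {𝒳 : Type*} [MeasurableSpace 𝒳]
    (P : Measure (𝒳 × Bool)) [IsProbabilityMeasure P] :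
    ∀ n : ℕ, rmajMeanRisk P (n + 1) ≤ rmajMeanRisk P n := by
  intro n
  set a := (P {z : 𝒳 × Bool | z.2 ≠ true}).toReal with ha
  set b := (P {z : 𝒳 × Bool | z.2 ≠ false}).toReal with hb
  have h1 : rmajMeanRisk P n = ∑ x : Fin n → Bool,
      Stmt18Aux.W a b x * Stmt18Aux.G a b n (Stmt18Aux.cnt x) := Stmt18Aux.repr_sum P n
  have h2 : rmajMeanRisk P (n + 1) = ∑ x : Fin (n + 1) → Bool,
      Stmt18Aux.W a b x * Stmt18Aux.G a b (n + 1) (Stmt18Aux.cnt x) :=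
    Stmt18Aux.repr_sum P (n + 1)
  rw [h1, h2]
  have hmeas : MeasurableSet {z : 𝒳 × Bool | z.2 ≠ false} := by
    have : {z : 𝒳 × Bool | z.2 ≠ false} = Prod.snd ⁻¹' {true} := by ext z; simp
    rw [this]
    exact measurable_snd (measurableSet_singleton _)
  have hcompl : {z : 𝒳 × Bool | z.2 ≠ true} = {z : 𝒳 × Bool | z.2 ≠ false}ᶜ := by
    ext ⟨zx, zb⟩
    cases zb <;> simp
  have hPsum : P {z : 𝒳 × Bool | z.2 ≠ false} + P {z : 𝒳 × Bool | z.2 ≠ true} = 1 := by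
    rw [hcompl]
    rw [measure_add_measure_compl hmeas]
    exact measure_univ
  have hab : a + b = 1 := by
    rw [ha, hb, ← ENNReal.toReal_add (measure_ne_top P _) (measure_ne_top P _)]
    rw [add_comm] at hPsum
    rw [hPsum]
    simp
  exact Stmt18Aux.key a b ENNReal.toReal_nonneg ENNReal.toReal_nonneg hab n

end
end

section
/- For the ordinary least squares estimator in linear regression with quadratic loss, the leave-one-out cross-validation estimator admits the closed form: R̂^{loo}(f̂; (x_i,y_i)_{1≤i≤n}) = (1/n) ∑_{i=1}^n ((y_i − (H y)_i)/(1 − H_{ii}))^2, where H = X(XᵀX)^{-1}Xᵀ is the hat matrix, X is the n×p design matrix (assumed such that XᵀX is invertible, and also invertible after deleting any single row), and y = (y_1,...,y_n). -/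
open Matrix

noncomputable section

/-- Design matrix with row `i` deleted. -/
def Xdel {n p : ℕ} (X : Matrix (Fin n) (Fin p) ℝ) (i : Fin n) :
    Matrix {j : Fin n // j ≠ i} (Fin p) ℝ :=
  fun j a => X j.1 a

/-- Response vector with observation `i` deleted. -/
def ydel {n : ℕ} (y : Fin n → ℝ) (i : Fin n) : {j : Fin n // j ≠ i} → ℝ :=
  fun j => y j.1

/-- Least-squares estimator computed on the sample with observation `i` removed. -/
def betaDel {n p : ℕ} (X : Matrix (Fin n) (Fin p) ℝ) (y : Fin n → ℝ) (i : Fin n) :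
    Fin p → ℝ :=
  ((Xdel X i)ᵀ * Xdel X i)⁻¹ *ᵥ ((Xdel X i)ᵀ *ᵥ ydel y i)

/-- Hat matrix `H = X (Xᵀ X)⁻¹ Xᵀ`. -/
def hatMat {n p : ℕ} (X : Matrix (Fin n) (Fin p) ℝ) : Matrix (Fin n) (Fin n) ℝ :=
  X * (Xᵀ * X)⁻¹ * Xᵀ

lemma sum_subtype_ne {n : ℕ} (i : Fin n) (f : Fin n → ℝ) :
    ∑ j : {j : Fin n // j ≠ i}, f j.1 = (∑ j, f j) - f i := by
  rw [← Finset.sum_subtype (Finset.univ.erase i)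
      (fun x => by simp [Finset.mem_erase]) f,
    eq_sub_iff_add_eq, Finset.sum_erase_add _ _ (Finset.mem_univ i)]

/-- Closed-form formula for the leave-one-out cross-validation estimator of ordinary
least squares in linear regression with the quadratic loss:
`(1/n) ∑ᵢ (yᵢ − xᵢᵀ β̂₍₋ᵢ₎)² = (1/n) ∑ᵢ ((yᵢ − (H y)ᵢ) / (1 − Hᵢᵢ))²`,
where `H` is the hat matrix, assuming `Xᵀ X` is invertible and remains so after deleting
any single row (equivalently `Hᵢᵢ < 1` for all `i`). -/
theorem stmt19 {n p : ℕ} (X : Matrix (Fin n) (Fin p) ℝ) (y : Fin n → ℝ)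
    (h1 : IsUnit (Xᵀ * X).det)
    (h2 : ∀ i : Fin n, IsUnit ((Xdel X i)ᵀ * Xdel X i).det)
    (h3 : ∀ i : Fin n, hatMat X i i < 1) :
    (n : ℝ)⁻¹ * ∑ i, (y i - X i ⬝ᵥ betaDel X y i) ^ 2
      = (n : ℝ)⁻¹ * ∑ i, ((y i - (hatMat X *ᵥ y) i) / (1 - hatMat X i i)) ^ 2 := by
  congr 1
  apply Finset.sum_congr rfl
  intro i _
  set A := Xᵀ * X with hA
  set b := betaDel X y i with hb
  set u : Fin p → ℝ := fun a => X i a with hu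
  -- Step 1: normal equations on the deleted sample
  have key : ((Xdel X i)ᵀ * Xdel X i) *ᵥ b = (Xdel X i)ᵀ *ᵥ ydel y i := by
    rw [hb, betaDel, Matrix.mulVec_mulVec, Matrix.mul_nonsing_inv _ (h2 i),
      Matrix.one_mulVec]
  -- Step 2: rewrite both sides componentwise
  have key2 : ∀ a, (Xᵀ *ᵥ (X *ᵥ b)) a - X i a * (X *ᵥ b) i
      = (Xᵀ *ᵥ y) a - X i a * y i := by
    intro a
    have hL : (((Xdel X i)ᵀ * Xdel X i) *ᵥ b) a
        = (Xᵀ *ᵥ (X *ᵥ b)) a - X i a * (X *ᵥ b) i := by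
      rw [← Matrix.mulVec_mulVec]
      show ∑ j : {j : Fin n // j ≠ i}, X j.1 a * ((Xdel X i) *ᵥ b) j = _
      have : ∀ j : {j : Fin n // j ≠ i}, ((Xdel X i) *ᵥ b) j = (X *ᵥ b) j.1 := by
        intro j; rfl
      simp_rw [this]
      rw [sum_subtype_ne i (fun j => X j a * (X *ᵥ b) j)]
      rfl
    have hR : ((Xdel X i)ᵀ *ᵥ ydel y i) a = (Xᵀ *ᵥ y) a - X i a * y i := by
      show ∑ j : {j : Fin n // j ≠ i}, X j.1 a * y j.1 = _
      rw [sum_subtype_ne i (fun j => X j a * y j)]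
      rfl
    rw [← hL, ← hR, key]
  -- Step 3: A *ᵥ b = Xᵀ *ᵥ y + ((X *ᵥ b) i - y i) • u
  have key3 : A *ᵥ b = Xᵀ *ᵥ y + ((X *ᵥ b) i - y i) • u := by
    funext a
    have := key2 a
    rw [hA, ← Matrix.mulVec_mulVec]
    simp only [Pi.add_apply, Pi.smul_apply, smul_eq_mul, hu]
    linarith [key2 a]
  -- Step 4: solve for b
  have hbeq : b = A⁻¹ *ᵥ (Xᵀ *ᵥ y) + ((X *ᵥ b) i - y i) • (A⁻¹ *ᵥ u) := by
    have : A⁻¹ *ᵥ (A *ᵥ b) = b := by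
      rw [Matrix.mulVec_mulVec, Matrix.nonsing_inv_mul _ h1, Matrix.one_mulVec]
    conv_lhs => rw [← this, key3]
    rw [Matrix.mulVec_add, Matrix.mulVec_smul]
  -- scalar quantities
  set s : ℝ := X i ⬝ᵥ b with hs
  set g : ℝ := (hatMat X *ᵥ y) i with hg
  set h : ℝ := hatMat X i i with hh
  have hgeq : g = X i ⬝ᵥ (A⁻¹ *ᵥ (Xᵀ *ᵥ y)) := by
    rw [hg, hatMat, ← Matrix.mulVec_mulVec, ← Matrix.mulVec_mulVec]
    rfl
  have hheq : h = X i ⬝ᵥ (A⁻¹ *ᵥ u) := by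
    have e1 : (hatMat X *ᵥ Pi.single i 1) i = hatMat X i i := by
      simp [Matrix.mulVec_single]
    have e2 : Xᵀ *ᵥ Pi.single i (1:ℝ) = u := by
      funext a
      simp [Matrix.mulVec_single, hu, Matrix.transpose_apply]
    rw [hh, ← e1, hatMat, ← Matrix.mulVec_mulVec, ← Matrix.mulVec_mulVec, e2]
    rfl
  have hseq : s = g + (s - y i) * h := by
    rw [hgeq, hheq]
    calc s = X i ⬝ᵥ b := hs
      _ = X i ⬝ᵥ (A⁻¹ *ᵥ (Xᵀ *ᵥ y) + ((X *ᵥ b) i - y i) • (A⁻¹ *ᵥ u)) := by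
            rw [← hbeq]
      _ = X i ⬝ᵥ (A⁻¹ *ᵥ (Xᵀ *ᵥ y)) + (s - y i) * (X i ⬝ᵥ (A⁻¹ *ᵥ u)) := by
            rw [dotProduct_add, dotProduct_smul, smul_eq_mul]; rfl
  have hne : (1:ℝ) - h ≠ 0 := by
    have := h3 i; rw [← hh] at this; linarith
  have hbase : y i - s = (y i - g) / (1 - h) := by
    rw [eq_div_iff hne]
    linear_combination -hseq
  rw [hbase]

end
end
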